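/- arXiv:2005.00064 — 10 statements merged into one kernel-verified Lean document; each statement's English description precedes it below -/
import Mathlib

section
/- Let G be a hypergraph whose vertices carry distinct real weights, and let H be an influence-blocking induced subhypergraph of G. Then the greedy algorithm outputs satisfy I(H) = I(G) ∩ V(H). -/
open MeasureTheory Finset

/-- A vertex `v` is selected by the greedy algorithm (largest weight first) run on the
hypergraph with edge set `E` and weights `w`: `v` is selected iff there is no edge `e`
containing `v` all of whose other vertices have larger weight and are themselves selected. -/
def greedySelect {V : Type*} [Fintype V] [DecidableEq V]
    (E : Finset (Finset V)) (w : V → ℝ) (v : V) : Prop :=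
  ¬ ∃ e ∈ E, v ∈ e ∧ (∀ u ∈ e, u ≠ v → w v < w u) ∧
      (∀ u ∈ e, u ≠ v → w v < w u → greedySelect E w u)
termination_by (Finset.univ.filter (fun u => w v < w u)).card
decreasing_by
  rename_i hvu
  apply Finset.card_lt_card
  constructor
  · intro x hx
    simp only [Finset.mem_filter, Finset.mem_univ, true_and] at *
    linarith
  · intro hsub
    have hmem : u ∈ Finset.univ.filter (fun x => w v < w x) := by
      simp only [Finset.mem_filter, Finset.mem_univ, true_and]; exact hvu
    have := hsub hmem
    simp only [Finset.mem_filter, Finset.mem_univ, true_and] at this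
    exact lt_irrefl _ this

open scoped Classical in
/-- The independent set produced by the greedy algorithm. -/
noncomputable def greedySet {V : Type*} [Fintype V] [DecidableEq V]
    (E : Finset (Finset V)) (w : V → ℝ) : Finset V :=
  Finset.univ.filter (fun v => greedySelect E w v)

/-- The product measure giving each vertex an independent Uniform[0,1] weight. -/
noncomputable def uniformWeights (V : Type*) [Fintype V] : Measure (V → ℝ) :=
  Measure.pi fun _ : V => volume.restrict (Set.Icc (0 : ℝ) 1)

/-- `U` induces an influence-blocking subhypergraph of the hypergraph with edge set `E`
and weights `w`: every vertex of `U` lying in an edge of `G` that is not an edge of the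
induced subhypergraph is not the smallest-weighted vertex of that edge. -/
def InfBlocking {V : Type*} [DecidableEq V]
    (E : Finset (Finset V)) (w : V → ℝ) (U : Finset V) : Prop :=
  ∀ v ∈ U, ∀ e ∈ E, v ∈ e → ¬ e ⊆ U → ∃ u ∈ e, w u < w v

open scoped Classical in
/-- The independent set produced by the greedy algorithm run on the subhypergraph of
`(V, E)` induced by the vertex set `U`. -/
noncomputable def greedySetOn {V : Type*} [Fintype V] [DecidableEq V]
    (U : Finset V) (E : Finset (Finset V)) (w : V → ℝ) : Finset V :=
  U.filter (fun v => greedySelect (E.filter (fun e => e ⊆ U)) w v)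

theorem greedy_key {V : Type} [Fintype V] [DecidableEq V]
    (E : Finset (Finset V)) (w : V → ℝ) (U : Finset V) (hU : InfBlocking E w U) :
    ∀ n : ℕ, ∀ v, (Finset.univ.filter (fun u => w v < w u)).card = n → v ∈ U →
      (greedySelect (E.filter (fun e => e ⊆ U)) w v ↔ greedySelect E w v) := by
  intro n
  induction n using Nat.strong_induction_on with
  | _ n ih =>
    intro v hcard hv
    have IH : ∀ u, w v < w u → u ∈ U →
        (greedySelect (E.filter (fun e => e ⊆ U)) w u ↔ greedySelect E w u) := by
      intro u hvu hu
      refine ih _ ?_ u rfl hu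
      rw [← hcard]
      apply Finset.card_lt_card
      constructor
      · intro x hx
        simp only [Finset.mem_filter, Finset.mem_univ, true_and] at *
        linarith
      · intro hsub
        have hmem : u ∈ Finset.univ.filter (fun x => w v < w x) := by
          simp only [Finset.mem_filter, Finset.mem_univ, true_and]; exact hvu
        have := hsub hmem
        simp only [Finset.mem_filter, Finset.mem_univ, true_and] at this
        exact lt_irrefl _ this
    rw [greedySelect, greedySelect]
    apply not_congr
    constructor
    · rintro ⟨e, he, hve, hbig, hsel⟩
      simp only [Finset.mem_filter] at he
      exact ⟨e, he.1, hve, hbig, fun u hu hne hlt =>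
        (IH u hlt (he.2 hu)).mp (hsel u hu hne hlt)⟩
    · rintro ⟨e, he, hve, hbig, hsel⟩
      have heU : e ⊆ U := by
        by_contra hns
        obtain ⟨u, hue, hwu⟩ := hU v hv e he hve hns
        have hne : u ≠ v := fun h => by rw [h] at hwu; exact lt_irrefl _ hwu
        exact absurd (hbig u hue hne) (not_lt.mpr hwu.le)
      refine ⟨e, Finset.mem_filter.mpr ⟨he, heU⟩, hve, hbig, fun u hu hne hlt =>
        (IH u hlt (heU hu)).mpr (hsel u hu hne hlt)⟩

theorem greedy_influence_blocking
    (V : Type) [Fintype V] [DecidableEq V]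
    (E : Finset (Finset V)) (hE : ∀ e ∈ E, e.Nonempty)
    (w : V → ℝ) (hw : Function.Injective w)
    (U : Finset V) (hU : InfBlocking E w U) :
    greedySetOn U E w = greedySet E w ∩ U := by
  classical
  ext v
  simp only [greedySetOn, greedySet, Finset.mem_filter, Finset.mem_inter,
    Finset.mem_univ, true_and]
  constructor
  · intro ⟨hv, hs⟩
    exact ⟨(greedy_key E w U hU _ v rfl hv).mp hs, hv⟩
  · intro ⟨hs, hv⟩
    exact ⟨hv, (greedy_key E w U hU _ v rfl hv).mpr hs⟩
end

section
/- Let G be a hypergraph whose vertices carry distinct real weights, and let A ⊆ V(G). Then there exists an influence-blocking induced subhypergraph B(A) of G with A ⊆ V(B(A)) such that V(B(A)) ⊆ V(H) for every influence-blocking induced subhypergraph H of G with A ⊆ V(H); in particular, B(A) is the unique minimal influence-blocking induced subhypergraph of G containing A. -/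
open Finset

theorem minimal_influence_blocking
    (V : Type) [Fintype V] [DecidableEq V]
    (E : Finset (Finset V)) (hE : ∀ e ∈ E, e.Nonempty)
    (w : V → ℝ) (hw : Function.Injective w)
    (A : Finset V) :
    ∃! B : Finset V, A ⊆ B ∧ InfBlocking E w B ∧
      ∀ U : Finset V, A ⊆ U → InfBlocking E w U → B ⊆ U := by
  classical
  set B0 : Finset V := Finset.univ.filter
    (fun v => ∀ U : Finset V, A ⊆ U → InfBlocking E w U → v ∈ U) with hB0
  have hmem : ∀ v, v ∈ B0 ↔ ∀ U : Finset V, A ⊆ U → InfBlocking E w U → v ∈ U := by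
    intro v; simp [hB0]
  have hA : A ⊆ B0 := fun a ha => (hmem a).2 (fun U hAU _ => hAU ha)
  have hblk : InfBlocking E w B0 := by
    intro v hv e he hve hns
    obtain ⟨x, hxe, hx⟩ : ∃ x ∈ e, ¬ ∀ U : Finset V, A ⊆ U → InfBlocking E w U → x ∈ U := by
      by_contra h
      push_neg at h
      exact hns (fun x hxe => (hmem x).2 (h x hxe))
    push_neg at hx
    obtain ⟨U, hAU, hUb, hxU⟩ := hx
    exact hUb v ((hmem v).1 hv U hAU hUb) e he hve (fun hsub => hxU (hsub hxe))
  have hmin : ∀ U : Finset V, A ⊆ U → InfBlocking E w U → B0 ⊆ U :=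
    fun U hAU hUb v hv => (hmem v).1 hv U hAU hUb
  refine ⟨B0, ⟨hA, hblk, hmin⟩, ?_⟩
  rintro B ⟨hAB, hBb, hBmin⟩
  exact Finset.Subset.antisymm (hBmin B0 hA hblk) (hmin B hAB hBb)
end

section
/- Let T be a rooted hypertree with root γ whose vertices carry distinct positive weights, W_γ being the weight of γ. Then the bonus function satisfies S_T(γ) = W_γ if γ ∈ I(T), and S_T(γ) = 0 otherwise; that is, S_T(γ) = W_γ·1[γ ∈ I(T)]. -/
open Finset

/-- The descending edges of a vertex `v` in a depth-labelled hypergraph: the edges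
containing `v` in which `v` is the (unique) vertex closest to the root. -/
def DescEdges {V : Type*} [DecidableEq V]
    (E : Finset (Finset V)) (dep : V → ℕ) (v : V) : Finset (Finset V) :=
  E.filter (fun e => v ∈ e ∧ ∀ u ∈ e, dep v ≤ dep u)

/-- `(V, E)` together with the root `γ` and depth function `dep` is a rooted hypertree:
the root is the unique vertex of depth `0`; every edge consists of a unique vertex
closest to the root together with vertices one level deeper; and every non-root vertex
lies in exactly one edge in which it is not the vertex closest to the root. -/
def IsRootedHypertree {V : Type*} [Fintype V] [DecidableEq V]
    (E : Finset (Finset V)) (γ : V) (dep : V → ℕ) : Prop :=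
  dep γ = 0 ∧ (∀ v, dep v = 0 → v = γ) ∧
  (∀ e ∈ E, ∃ t ∈ e, ∀ u ∈ e, u ≠ t → dep u = dep t + 1) ∧
  (∀ v : V, v ≠ γ → (E.filter (fun e => v ∈ e ∧ ∃ u ∈ e, dep u < dep v)).card = 1)

/-!
`S v = w v` says exactly that the greedy algorithm run on the subtree below `v` selects `v`.
The greedy algorithm on the whole tree selects `v` iff this holds and, in addition, `v` is
not killed through its parent edge (the unique edge in which `v` is not closest to the root)
by heavier selected vertices. This is proved from the heaviest vertex down: in a descending
edge `f` of `v`, a child `u` with `S u ≥ w v` has `S u = w u > w v`, and `u` cannot be killed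
through its parent edge `f`, which contains the lighter vertex `v`. The root has no parent edge.
-/

theorem mem_descEdges {V : Type*} [DecidableEq V] {E : Finset (Finset V)} {dep : V → ℕ}
    {v : V} {e : Finset V} :
    e ∈ DescEdges E dep v ↔ e ∈ E ∧ v ∈ e ∧ ∀ u ∈ e, dep v ≤ dep u :=
  mem_filter

namespace IsRootedHypertree

variable {V : Type*} [Fintype V] [DecidableEq V] {E : Finset (Finset V)} {γ : V} {dep : V → ℕ}

theorem dep_eq_add_one_of_mem_descEdges (h : IsRootedHypertree E γ dep) {v u : V}
    {f : Finset V} (hf : f ∈ DescEdges E dep v) (hu : u ∈ f) (huv : u ≠ v) :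
    dep u = dep v + 1 := by
  obtain ⟨hfE, hvf, hmin⟩ := mem_descEdges.1 hf
  obtain ⟨t, ht, htdep⟩ := h.2.2.1 f hfE
  obtain rfl : t = v := by
    by_contra htv
    have := htdep v hvf (Ne.symm htv)
    have := hmin t ht
    omega
  exact htdep u hu huv

theorem eq_of_mem_descEdges_of_exists_dep_lt (h : IsRootedHypertree E γ dep) {v x : V}
    {f e : Finset V} (hf : f ∈ DescEdges E dep v) (hx : x ∈ f) (hxv : x ≠ v)
    (he : e ∈ E) (hxe : x ∈ e) (hlow : ∃ u ∈ e, dep u < dep x) : e = f := by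
  have hdx := h.dep_eq_add_one_of_mem_descEdges hf hx hxv
  have hxγ : x ≠ γ := by
    rintro rfl
    rw [h.1] at hdx
    omega
  obtain ⟨a, ha⟩ := card_eq_one.1 (h.2.2.2 x hxγ)
  have hf' : f ∈ E.filter (fun e => x ∈ e ∧ ∃ u ∈ e, dep u < dep x) :=
    mem_filter.2 ⟨(mem_descEdges.1 hf).1, hx, v, (mem_descEdges.1 hf).2.1, by omega⟩
  have he' : e ∈ E.filter (fun e => x ∈ e ∧ ∃ u ∈ e, dep u < dep x) :=
    mem_filter.2 ⟨he, hxe, hlow⟩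
  rw [ha, mem_singleton] at hf' he'
  rw [hf', he']

theorem mem_descEdges_or_exists_dep_lt (h : IsRootedHypertree E γ dep) {v : V}
    {e : Finset V} (he : e ∈ E) (hve : v ∈ e) :
    e ∈ DescEdges E dep v ∨ ∃ u ∈ e, dep u < dep v := by
  obtain ⟨t, ht, htdep⟩ := h.2.2.1 e he
  rcases eq_or_ne t v with rfl | htv
  · refine .inl (mem_descEdges.2 ⟨he, hve, fun u hu => ?_⟩)
    rcases eq_or_ne u t with rfl | hut
    · exact le_rfl
    · have := htdep u hu hut
      omega
  · have := htdep v hve htv.symm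
    exact .inr ⟨t, ht, by omega⟩

end IsRootedHypertree

open scoped Classical in
def IsBonusFunction {V : Type*} [DecidableEq V] (E : Finset (Finset V)) (dep : V → ℕ)
    (w S : V → ℝ) : Prop :=
  ∀ v : V, S v = w v * ∏ e ∈ DescEdges E dep v,
    (if ∃ u ∈ e, u ≠ v ∧ S u < w v then (1 : ℝ) else 0)

namespace IsBonusFunction

variable {V : Type*} [DecidableEq V] {E : Finset (Finset V)} {dep : V → ℕ} {w S : V → ℝ}

open scoped Classical in
theorem apply_eq (hS : IsBonusFunction E dep w S) (v : V) :
    S v = if ∀ e ∈ DescEdges E dep v, ∃ u ∈ e, u ≠ v ∧ S u < w v then w v else 0 := by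
  rw [hS v, prod_boole, mul_ite, mul_one, mul_zero]

theorem eq_zero_or_eq (hS : IsBonusFunction E dep w S) (v : V) : S v = 0 ∨ S v = w v := by
  rw [hS.apply_eq v]
  split_ifs <;> simp

theorem eq_self_iff (hS : IsBonusFunction E dep w S) {v : V} (hv : w v ≠ 0) :
    S v = w v ↔ ∀ e ∈ DescEdges E dep v, ∃ u ∈ e, u ≠ v ∧ S u < w v := by
  rw [hS.apply_eq v]
  split_ifs with h
  · simpa using h
  · simp [h, hv.symm]

theorem eq_and_lt_of_le (hS : IsBonusFunction E dep w S) (hw : Function.Injective w)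
    (hpos : ∀ v, 0 < w v) {u v : V} (huv : u ≠ v) (hle : w v ≤ S u) :
    S u = w u ∧ w v < w u := by
  rcases hS.eq_zero_or_eq u with h | h
  · linarith [hpos v]
  · exact ⟨h, lt_of_le_of_ne (h ▸ hle) fun hvu => huv (hw hvu).symm⟩

end IsBonusFunction

theorem card_filter_lt_lt_of_lt {V β : Type*} [Fintype V] [LinearOrder β] {f : V → β} {u v : V}
    (h : f v < f u) : #{x | f u < f x} < #{x | f v < f x} := by
  refine card_lt_card ⟨monotone_filter_right _ fun _ _ => h.trans, fun hsub => ?_⟩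
  have := mem_filter.1 (hsub (mem_filter.2 ⟨mem_univ u, h⟩))
  exact lt_irrefl _ this.2

section Greedy

variable {V : Type*} [Fintype V] [DecidableEq V] {E : Finset (Finset V)} {w : V → ℝ}

theorem greedySelect_iff {v : V} :
    greedySelect E w v ↔ ¬ ∃ e ∈ E, v ∈ e ∧ ∀ u ∈ e, u ≠ v → w v < w u ∧ greedySelect E w u := by
  rw [greedySelect]
  refine not_congr (exists_congr fun e => and_congr_right fun _ => and_congr_right fun _ => ?_)
  exact ⟨fun ⟨hlt, hsel⟩ u hu huv => ⟨hlt u hu huv, hsel u hu huv (hlt u hu huv)⟩,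
    fun h => ⟨fun u hu huv => (h u hu huv).1, fun u hu huv _ => (h u hu huv).2⟩⟩

def KilledByParentEdge (E : Finset (Finset V)) (dep : V → ℕ) (w : V → ℝ) (v : V) : Prop :=
  ∃ e ∈ E, v ∈ e ∧ (∃ u ∈ e, dep u < dep v) ∧
    ∀ u ∈ e, u ≠ v → w v < w u ∧ greedySelect E w u

theorem not_greedySelect_of_killedByParentEdge {dep : V → ℕ} {v : V}
    (hk : KilledByParentEdge E dep w v) : ¬ greedySelect E w v := by
  obtain ⟨e, he, hve, -, hkill⟩ := hk
  exact fun hv => greedySelect_iff.1 hv ⟨e, he, hve, hkill⟩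

variable {γ : V} {dep : V → ℕ} {S : V → ℝ}

theorem bonus_eq_of_greedySelect (htree : IsRootedHypertree E γ dep)
    (hw : Function.Injective w) (hpos : ∀ v, 0 < w v) (hS : IsBonusFunction E dep w S) {v : V}
    (ih : ∀ u, w v < w u → S u = w u → ¬ KilledByParentEdge E dep w u → greedySelect E w u)
    (hv : greedySelect E w v) : S v = w v := by
  rw [hS.eq_self_iff (hpos v).ne']
  intro f hf
  by_contra! hno
  obtain ⟨hfE, hvf, -⟩ := mem_descEdges.1 hf
  refine greedySelect_iff.1 hv ⟨f, hfE, hvf, fun u hu huv => ?_⟩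
  obtain ⟨hSu, hvu⟩ := hS.eq_and_lt_of_le hw hpos huv (hno u hu huv)
  refine ⟨hvu, ih u hvu hSu ?_⟩
  rintro ⟨e, he, hue, hlow, hkill⟩
  obtain rfl := htree.eq_of_mem_descEdges_of_exists_dep_lt hf hu huv he hue hlow
  exact lt_asymm hvu (hkill v hvf huv.symm).1

theorem greedySelect_of_bonus_eq (htree : IsRootedHypertree E γ dep) (hpos : ∀ v, 0 < w v)
    (hS : IsBonusFunction E dep w S) {v : V}
    (ih : ∀ u, w v < w u → greedySelect E w u → S u = w u)
    (hSv : S v = w v) (hk : ¬ KilledByParentEdge E dep w v) : greedySelect E w v := by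
  rw [greedySelect_iff]
  rintro ⟨e, he, hve, hheavy⟩
  rcases htree.mem_descEdges_or_exists_dep_lt he hve with hdesc | hlow
  · obtain ⟨u, hu, huv, hlt⟩ := (hS.eq_self_iff (hpos v).ne').1 hSv e hdesc
    obtain ⟨hvu, hsel⟩ := hheavy u hu huv
    rw [ih u hvu hsel] at hlt
    exact lt_asymm hvu hlt
  · exact hk ⟨e, he, hve, hlow, hheavy⟩

theorem greedySelect_iff_bonus_eq (htree : IsRootedHypertree E γ dep)
    (hw : Function.Injective w) (hpos : ∀ v, 0 < w v) (hS : IsBonusFunction E dep w S)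
    (v : V) : greedySelect E w v ↔ S v = w v ∧ ¬ KilledByParentEdge E dep w v := by
  have ih (u : V) (hvu : w v < w u) :
      greedySelect E w u ↔ S u = w u ∧ ¬ KilledByParentEdge E dep w u :=
    greedySelect_iff_bonus_eq htree hw hpos hS u
  refine ⟨fun hv => ⟨?_, fun hk => not_greedySelect_of_killedByParentEdge hk hv⟩,
    fun ⟨hSv, hk⟩ => ?_⟩
  · exact bonus_eq_of_greedySelect htree hw hpos hS
      (fun u hvu hSu hku => (ih u hvu).2 ⟨hSu, hku⟩) hv
  · exact greedySelect_of_bonus_eq htree hpos hS (fun u hvu hu => ((ih u hvu).1 hu).1) hSv hk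
termination_by #{u | w v < w u}
decreasing_by exact card_filter_lt_lt_of_lt hvu

end Greedy

open scoped Classical in
theorem bonus_function_at_root
    (V : Type) [Fintype V] [DecidableEq V]
    (E : Finset (Finset V)) (γ : V) (dep : V → ℕ)
    (htree : IsRootedHypertree E γ dep)
    (w : V → ℝ) (hw : Function.Injective w) (hpos : ∀ v, 0 < w v)
    (S : V → ℝ)
    (hS : ∀ v : V, S v = w v * ∏ e ∈ DescEdges E dep v,
      (if ∃ u ∈ e, u ≠ v ∧ S u < w v then (1 : ℝ) else 0)) :
    S γ = w γ * (if γ ∈ greedySet E w then (1 : ℝ) else 0) := by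
  have hγ : ¬ KilledByParentEdge E dep w γ := by
    rintro ⟨-, -, -, ⟨u, -, hu⟩, -⟩
    rw [htree.1] at hu
    exact Nat.not_lt_zero _ hu
  have hsel : γ ∈ greedySet E w ↔ S γ = w γ := by
    rw [greedySet, mem_filter, greedySelect_iff_bonus_eq htree hw hpos hS γ]
    simp [hγ]
  split_ifs with h
  · rw [mul_one]
    exact hsel.1 h
  · rw [mul_zero]
    exact (IsBonusFunction.eq_zero_or_eq hS γ).resolve_right (hsel.not.1 h)
end

section
/- Fix integers r ≥ 1 and d ≥ 1, and let F_{d,h} : [0,1] → [0,1] be defined by F_{d,0}(x) = x and F_{d,h}(x) = 1 − ∫_x^1 (1 − (1 − F_{d,h−1}(t))^r)^d dt for h ≥ 1. Then for every x ∈ [0,1] and every integer h ≥ 0, (−1)^h·F_{d,h}(x) ≤ (−1)^h·F_{d,h+1}(x) and (−1)^h·F_{d,h}(x) ≤ (−1)^h·F_{d,h+2}(x). -/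
/-!
With `T_g F (x) = 1 - ∫_x^1 g (F t) dt` and `g y = (1 - (1 - y)^r)^d` we have
`F_{d,h+1} = T_g F_{d,h}`. As `g` maps `[0,1]` monotonically into itself, `T_g` reverses the
pointwise order of functions `[0,1] → [0,1]`, and `x ≤ T_g F (x)`. Hence `F_{d,0} ≤ F_{d,k+1}`,
and applying `T_g` `h` times, each time reversing the inequality, gives
`(-1)^h F_{d,h} ≤ (-1)^h F_{d,h+k+1}` for all `k`.
-/

/-- The functions `F_{d,h}` defined by `F_{d,0}(x) = x` and
`F_{d,h}(x) = 1 - ∫_x^1 (1-(1-F_{d,h-1}(t))^r)^d dt`. -/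
noncomputable def Fseq (r d : ℕ) : ℕ → ℝ → ℝ
  | 0 => fun x => x
  | h + 1 => fun x => 1 - ∫ t in x..(1 : ℝ), (1 - (1 - Fseq r d h t) ^ r) ^ d

open Set intervalIntegral

noncomputable def integralTransform (g F : ℝ → ℝ) (x : ℝ) : ℝ :=
  1 - ∫ t in x..1, g (F t)

section integralTransform

variable {g F : ℝ → ℝ}

theorem continuous_integralTransform (hg : Continuous g) (hF : Continuous F) :
    Continuous (integralTransform g F) := by
  have hprim : Continuous fun x => ∫ t in (1 : ℝ)..x, g (F t) :=
    continuous_primitive (fun a b => (hg.comp hF).intervalIntegrable a b) 1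
  have hform : integralTransform g F = fun x => 1 + ∫ t in (1 : ℝ)..x, g (F t) :=
    funext fun x => by rw [integralTransform, integral_symm, sub_neg_eq_add]
  exact hform ▸ continuous_const.add hprim

theorem integralTransform_le_one (hgF : ∀ t ∈ Icc (0 : ℝ) 1, 0 ≤ g (F t)) {x : ℝ}
    (hx : x ∈ Icc (0 : ℝ) 1) : integralTransform g F x ≤ 1 := by
  have : 0 ≤ ∫ t in x..1, g (F t) :=
    integral_nonneg hx.2 fun t ht => hgF t ⟨hx.1.trans ht.1, ht.2⟩
  unfold integralTransform
  linarith

theorem le_integralTransform (hg : Continuous g) (hF : Continuous F)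
    (hgF : ∀ t ∈ Icc (0 : ℝ) 1, g (F t) ≤ 1) {x : ℝ} (hx : x ∈ Icc (0 : ℝ) 1) :
    x ≤ integralTransform g F x := by
  have : ∫ t in x..1, g (F t) ≤ ∫ _ in x..1, (1 : ℝ) :=
    integral_mono_on hx.2 ((hg.comp hF).intervalIntegrable x 1) intervalIntegrable_const
      fun t ht => hgF t ⟨hx.1.trans ht.1, ht.2⟩
  rw [integral_const, smul_eq_mul, mul_one] at this
  unfold integralTransform
  linarith

theorem mapsTo_integralTransform (hg : Continuous g) (hF : Continuous F)
    (hgI : MapsTo g (Icc 0 1) (Icc 0 1)) (hFI : MapsTo F (Icc 0 1) (Icc 0 1)) :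
    MapsTo (integralTransform g F) (Icc 0 1) (Icc 0 1) := fun _ hx =>
  ⟨hx.1.trans (le_integralTransform hg hF (fun _ ht => (hgI (hFI ht)).2) hx),
    integralTransform_le_one (fun _ ht => (hgI (hFI ht)).1) hx⟩

theorem integralTransform_antitone {G : ℝ → ℝ} (hg : Continuous g)
    (hg_mono : MonotoneOn g (Icc 0 1)) (hF : Continuous F) (hG : Continuous G)
    (hFI : MapsTo F (Icc 0 1) (Icc 0 1)) (hGI : MapsTo G (Icc 0 1) (Icc 0 1))
    (hFG : ∀ t ∈ Icc (0 : ℝ) 1, F t ≤ G t) {x : ℝ} (hx : x ∈ Icc (0 : ℝ) 1) :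
    integralTransform g G x ≤ integralTransform g F x := by
  have : ∫ t in x..1, g (F t) ≤ ∫ t in x..1, g (G t) :=
    integral_mono_on hx.2 ((hg.comp hF).intervalIntegrable x 1)
      ((hg.comp hG).intervalIntegrable x 1) fun t ht =>
        have htI : t ∈ Icc (0 : ℝ) 1 := ⟨hx.1.trans ht.1, ht.2⟩
        hg_mono (hFI htI) (hGI htI) (hFG t htI)
  unfold integralTransform
  linarith

end integralTransform

namespace Fseq

noncomputable def kernel (r d : ℕ) (y : ℝ) : ℝ := (1 - (1 - y) ^ r) ^ d

variable {r d : ℕ}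

theorem continuous_kernel : Continuous (kernel r d) := by
  unfold kernel; fun_prop

theorem mapsTo_kernel : MapsTo (kernel r d) (Icc 0 1) (Icc 0 1) := fun y ⟨hy0, hy1⟩ => by
  have h0 : 0 ≤ (1 - y) ^ r := pow_nonneg (by linarith) r
  have h1 : (1 - y) ^ r ≤ 1 := pow_le_one₀ (by linarith) (by linarith)
  exact ⟨pow_nonneg (by linarith) d, pow_le_one₀ (by linarith) (by linarith)⟩

theorem monotoneOn_kernel : MonotoneOn (kernel r d) (Icc 0 1) :=
  fun y ⟨hy0, hy1⟩ z ⟨_, hz1⟩ hyz => by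
    have h1 : (1 - z) ^ r ≤ (1 - y) ^ r := pow_le_pow_left₀ (by linarith) (by linarith) r
    have h2 : (1 - y) ^ r ≤ 1 := pow_le_one₀ (by linarith) (by linarith)
    exact pow_le_pow_left₀ (by linarith) (by linarith) d

theorem succ_eq (h : ℕ) : Fseq r d (h + 1) = integralTransform (kernel r d) (Fseq r d h) := rfl

theorem continuous (h : ℕ) : Continuous (Fseq r d h) := by
  induction h with
  | zero => exact continuous_id
  | succ h ih => exact succ_eq h ▸ continuous_integralTransform continuous_kernel ih

theorem mapsTo (h : ℕ) : MapsTo (Fseq r d h) (Icc 0 1) (Icc 0 1) := by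
  induction h with
  | zero => exact mapsTo_id _
  | succ h ih =>
    exact succ_eq h ▸ mapsTo_integralTransform continuous_kernel (continuous h) mapsTo_kernel ih

theorem le_succ (h : ℕ) {x : ℝ} (hx : x ∈ Icc (0 : ℝ) 1) : x ≤ Fseq r d (h + 1) x :=
  le_integralTransform continuous_kernel (continuous h)
    (fun _ ht => (mapsTo_kernel (mapsTo h ht)).2) hx

theorem succ_antitone {a b : ℕ} (hab : ∀ t ∈ Icc (0 : ℝ) 1, Fseq r d a t ≤ Fseq r d b t)
    {x : ℝ} (hx : x ∈ Icc (0 : ℝ) 1) : Fseq r d (b + 1) x ≤ Fseq r d (a + 1) x :=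
  integralTransform_antitone continuous_kernel monotoneOn_kernel (continuous a) (continuous b)
    (mapsTo a) (mapsTo b) hab hx

theorem neg_one_pow_mul_succ_le {h a b : ℕ}
    (hab : ∀ t ∈ Icc (0 : ℝ) 1, (-1 : ℝ) ^ h * Fseq r d a t ≤ (-1) ^ h * Fseq r d b t)
    {x : ℝ} (hx : x ∈ Icc (0 : ℝ) 1) :
    (-1 : ℝ) ^ (h + 1) * Fseq r d (a + 1) x ≤ (-1) ^ (h + 1) * Fseq r d (b + 1) x := by
  rw [pow_succ, mul_neg_one, neg_mul, neg_mul, neg_le_neg_iff]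
  rcases neg_one_pow_eq_or ℝ h with hsign | hsign <;>
    simp only [hsign, one_mul, neg_one_mul, neg_le_neg_iff] at hab ⊢ <;>
    exact succ_antitone hab hx

theorem neg_one_pow_mul_le (h j : ℕ) {x : ℝ} (hx : x ∈ Icc (0 : ℝ) 1) :
    (-1 : ℝ) ^ h * Fseq r d h x ≤ (-1) ^ h * Fseq r d (h + (j + 1)) x := by
  induction h generalizing x with
  | zero =>
    rw [pow_zero, one_mul, one_mul, zero_add]
    exact le_succ j hx
  | succ h ih =>
    simpa only [Nat.add_right_comm h 1] using neg_one_pow_mul_succ_le (fun _ ht => ih ht) hx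

end Fseq

theorem Fseq_oscillation_general (r d : ℕ) :
    ∀ x ∈ Set.Icc (0 : ℝ) 1, ∀ h : ℕ,
      (-1 : ℝ) ^ h * Fseq r d h x ≤ (-1 : ℝ) ^ h * Fseq r d (h + 1) x ∧
      (-1 : ℝ) ^ h * Fseq r d h x ≤ (-1 : ℝ) ^ h * Fseq r d (h + 2) x :=
  fun _ hx h => ⟨Fseq.neg_one_pow_mul_le h 0 hx, Fseq.neg_one_pow_mul_le h 1 hx⟩

theorem Fseq_oscillation (r d : ℕ) (hr : 1 ≤ r) (hd : 1 ≤ d) :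
    ∀ x ∈ Set.Icc (0 : ℝ) 1, ∀ h : ℕ,
      (-1 : ℝ) ^ h * Fseq r d h x ≤ (-1 : ℝ) ^ h * Fseq r d (h + 1) x ∧
      (-1 : ℝ) ^ h * Fseq r d h x ≤ (-1 : ℝ) ^ h * Fseq r d (h + 2) x :=
  Fseq_oscillation_general r d
end

section
/- Fix integers r ≥ 1 and d ≥ 1, and let F_{d,h} : [0,1] → [0,1] be defined by F_{d,0}(x) = x and F_{d,h}(x) = 1 − ∫_x^1 (1 − (1 − F_{d,h−1}(t))^r)^d dt for h ≥ 1. Then there exist functions F_{d,even}, F_{d,odd} : [0,1] → [0,1] such that F_{d,2k}(x) → F_{d,even}(x) and F_{d,2k+1}(x) → F_{d,odd}(x) pointwise as k → ∞, and F_{d,even}(x) ≤ F_{d,odd}(x) for all x ∈ [0,1]. -/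
/-!
Write `φ(y) = (1 - (1 - y)^r)^d`, so that `F_{h+1}(x) = 1 - ∫_x^1 φ(F_h(t)) dt`. Since `φ` is
monotone on `[0,1]`, the map `F_h ↦ F_{h+1}` reverses the pointwise order, and its square
preserves it. Every `F_h` lies above `F_0 = id`, so `F_{2k} ≤ F_{2k+h}` for all `k, h`: the even
iterates increase, the odd ones decrease, and each even iterate lies below the next odd one.
Bounded monotone sequences converge, and the inequality passes to the limit.
-/

open Set Filter

section

variable (r d : ℕ)

lemma mapsTo_one_sub_one_sub_pow_pow :
    MapsTo (fun y : ℝ => (1 - (1 - y) ^ r) ^ d) (Icc 0 1) (Icc 0 1) := by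
  rintro y ⟨hy0, hy1⟩
  have hpow : (1 - y) ^ r ≤ 1 := pow_le_one₀ (by linarith) (by linarith)
  have hpow' : 0 ≤ (1 - y) ^ r := pow_nonneg (by linarith) r
  exact ⟨pow_nonneg (by linarith) d, pow_le_one₀ (by linarith) (by linarith)⟩

lemma monotoneOn_one_sub_one_sub_pow_pow :
    MonotoneOn (fun y : ℝ => (1 - (1 - y) ^ r) ^ d) (Icc 0 1) := by
  rintro a ⟨ha0, -⟩ b ⟨-, hb1⟩ hab
  have hpow : (1 - b) ^ r ≤ (1 - a) ^ r := pow_le_pow_left₀ (by linarith) (by linarith) r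
  have hpow' : (1 - a) ^ r ≤ 1 := pow_le_one₀ (by linarith) (by linarith)
  exact pow_le_pow_left₀ (by linarith) (by linarith) d

variable {r d}

@[fun_prop]
lemma continuous_Fseq (h : ℕ) : Continuous (Fseq r d h) := by
  induction h with
  | zero => exact continuous_id
  | succ h ih =>
    have hsymm : (fun x => ∫ t in x..(1 : ℝ), (1 - (1 - Fseq r d h t) ^ r) ^ d) =
        fun x => -∫ t in (1 : ℝ)..x, (1 - (1 - Fseq r d h t) ^ r) ^ d :=
      funext fun x => intervalIntegral.integral_symm 1 x
    refine continuous_const.sub ?_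
    rw [hsymm]
    exact (intervalIntegral.continuous_primitive
      (fun a b => (by fun_prop : Continuous _).intervalIntegrable a b) 1).neg

lemma Fseq_mem_Icc (h : ℕ) {x : ℝ} (hx : x ∈ Icc (0 : ℝ) 1) : Fseq r d h x ∈ Icc x 1 := by
  induction h generalizing x with
  | zero => exact ⟨le_rfl, hx.2⟩
  | succ h ih =>
    have hφ : ∀ t ∈ Icc x 1, (1 - (1 - Fseq r d h t) ^ r) ^ d ∈ Icc (0 : ℝ) 1 := by
      intro t ht
      have ht01 : t ∈ Icc (0 : ℝ) 1 := ⟨hx.1.trans ht.1, ht.2⟩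
      exact mapsTo_one_sub_one_sub_pow_pow r d ⟨ht01.1.trans (ih ht01).1, (ih ht01).2⟩
    have hlo : 0 ≤ ∫ t in x..(1 : ℝ), (1 - (1 - Fseq r d h t) ^ r) ^ d :=
      intervalIntegral.integral_nonneg hx.2 fun t ht => (hφ t ht).1
    have hhi : ∫ t in x..(1 : ℝ), (1 - (1 - Fseq r d h t) ^ r) ^ d ≤ ∫ _ in x..(1 : ℝ), (1 : ℝ) :=
      intervalIntegral.integral_mono_on hx.2
        ((by fun_prop : Continuous _).intervalIntegrable x 1) intervalIntegrable_const
        fun t ht => (hφ t ht).2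
    rw [intervalIntegral.integral_const, smul_eq_mul, mul_one] at hhi
    exact ⟨by simp only [Fseq]; linarith, by simp only [Fseq]; linarith⟩

lemma Fseq_mem_Icc_zero_one (h : ℕ) {x : ℝ} (hx : x ∈ Icc (0 : ℝ) 1) :
    Fseq r d h x ∈ Icc (0 : ℝ) 1 :=
  ⟨hx.1.trans (Fseq_mem_Icc h hx).1, (Fseq_mem_Icc h hx).2⟩

lemma Fseq_succ_le_of_le {a b : ℕ} (hab : ∀ t ∈ Icc (0 : ℝ) 1, Fseq r d a t ≤ Fseq r d b t)
    {x : ℝ} (hx : x ∈ Icc (0 : ℝ) 1) : Fseq r d (b + 1) x ≤ Fseq r d (a + 1) x := by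
  have hmono : ∫ t in x..(1 : ℝ), (1 - (1 - Fseq r d a t) ^ r) ^ d ≤
      ∫ t in x..(1 : ℝ), (1 - (1 - Fseq r d b t) ^ r) ^ d := by
    refine intervalIntegral.integral_mono_on hx.2
      ((by fun_prop : Continuous _).intervalIntegrable x 1)
      ((by fun_prop : Continuous _).intervalIntegrable x 1) fun t ht => ?_
    have ht01 : t ∈ Icc (0 : ℝ) 1 := ⟨hx.1.trans ht.1, ht.2⟩
    exact monotoneOn_one_sub_one_sub_pow_pow r d (Fseq_mem_Icc_zero_one a ht01)
      (Fseq_mem_Icc_zero_one b ht01) (hab t ht01)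
  simp only [Fseq]
  linarith

lemma Fseq_two_mul_le (k h : ℕ) {x : ℝ} (hx : x ∈ Icc (0 : ℝ) 1) :
    Fseq r d (2 * k) x ≤ Fseq r d (2 * k + h) x := by
  induction k generalizing x with
  | zero => simpa [Fseq] using (Fseq_mem_Icc h hx).1
  | succ k ih =>
    rw [show 2 * (k + 1) + h = 2 * k + h + 1 + 1 by ring]
    exact Fseq_succ_le_of_le (fun t ht => Fseq_succ_le_of_le (fun s hs => ih hs) ht) hx

end

theorem Fseq_even_odd_limits_general (r d : ℕ) :
    ∃ Feven Fodd : ℝ → ℝ, ∀ x ∈ Set.Icc (0 : ℝ) 1,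
      Feven x ∈ Set.Icc (0 : ℝ) 1 ∧ Fodd x ∈ Set.Icc (0 : ℝ) 1 ∧
      Filter.Tendsto (fun k : ℕ => Fseq r d (2 * k) x) Filter.atTop (nhds (Feven x)) ∧
      Filter.Tendsto (fun k : ℕ => Fseq r d (2 * k + 1) x) Filter.atTop (nhds (Fodd x)) ∧
      Feven x ≤ Fodd x := by
  refine ⟨fun x => ⨆ k : ℕ, Fseq r d (2 * k) x, fun x => ⨅ k : ℕ, Fseq r d (2 * k + 1) x,
    fun x hx => ?_⟩
  have hmem (h : ℕ) := Fseq_mem_Icc_zero_one (r := r) (d := d) h hx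
  have heven : Monotone fun k => Fseq r d (2 * k) x :=
    monotone_nat_of_le_succ fun k => Fseq_two_mul_le k 2 hx
  have hodd : Antitone fun k => Fseq r d (2 * k + 1) x :=
    antitone_nat_of_succ_le fun k => Fseq_succ_le_of_le (fun t ht => Fseq_two_mul_le k 2 ht) hx
  have hlim_even := tendsto_atTop_ciSup heven ⟨1, by rintro _ ⟨k, rfl⟩; exact (hmem _).2⟩
  have hlim_odd := tendsto_atTop_ciInf hodd ⟨0, by rintro _ ⟨k, rfl⟩; exact (hmem _).1⟩
  exact ⟨isClosed_Icc.mem_of_tendsto hlim_even (Eventually.of_forall fun k => hmem _),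
    isClosed_Icc.mem_of_tendsto hlim_odd (Eventually.of_forall fun k => hmem _),
    hlim_even, hlim_odd,
    le_of_tendsto_of_tendsto' hlim_even hlim_odd fun k => Fseq_two_mul_le k 1 hx⟩

theorem Fseq_even_odd_limits (r d : ℕ) (hr : 1 ≤ r) (hd : 1 ≤ d) :
    ∃ Feven Fodd : ℝ → ℝ, ∀ x ∈ Set.Icc (0 : ℝ) 1,
      Feven x ∈ Set.Icc (0 : ℝ) 1 ∧ Fodd x ∈ Set.Icc (0 : ℝ) 1 ∧
      Filter.Tendsto (fun k : ℕ => Fseq r d (2 * k) x) Filter.atTop (nhds (Feven x)) ∧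
      Filter.Tendsto (fun k : ℕ => Fseq r d (2 * k + 1) x) Filter.atTop (nhds (Fodd x)) ∧
      Feven x ≤ Fodd x :=
  Fseq_even_odd_limits_general r d
end

section
/- Fix integers r ≥ 1 and d ≥ 1, and let F_{d,h} : [0,1] → [0,1] be defined by F_{d,0}(x) = x and F_{d,h}(x) = 1 − ∫_x^1 (1 − (1 − F_{d,h−1}(t))^r)^d dt for h ≥ 1. Then there exists a function F_d : [0,1] → [0,1] such that F_{d,h}(x) → F_d(x) pointwise as h → ∞, and F_d satisfies F_d(x) = 1 − ∫_x^1 (1 − (1 − F_d(t))^r)^d dt for all x ∈ [0,1]. -/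
open MeasureTheory Filter Set intervalIntegral Topology

namespace FseqAux

def g (r d : ℕ) (y : ℝ) : ℝ := (1 - (1 - y) ^ r) ^ d

lemma g_cont (r d : ℕ) : Continuous (g r d) := by unfold g; fun_prop

lemma g_mem (r d : ℕ) {y : ℝ} (hy : y ∈ Icc (0:ℝ) 1) : g r d y ∈ Icc (0:ℝ) 1 := by
  obtain ⟨h0, h1⟩ := hy
  have ha0 : (0:ℝ) ≤ (1 - y) ^ r := pow_nonneg (by linarith) r
  have ha1 : (1 - y) ^ r ≤ 1 := pow_le_one₀ (n := r) (by linarith) (by linarith)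
  exact ⟨pow_nonneg (by linarith) d, pow_le_one₀ (n := d) (by linarith) (by linarith)⟩

lemma abs_pow_sub_pow_le (n : ℕ) {u v : ℝ} (hu : |u| ≤ 1) (hv : |v| ≤ 1) :
    |u ^ n - v ^ n| ≤ n * |u - v| := by
  induction n with
  | zero => simp
  | succ n ih =>
    have e : u ^ (n+1) - v ^ (n+1) = u * (u ^ n - v ^ n) + (u - v) * v ^ n := by ring
    rw [e]
    calc |u * (u ^ n - v ^ n) + (u - v) * v ^ n|
        ≤ |u * (u ^ n - v ^ n)| + |(u - v) * v ^ n| := abs_add_le _ _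
      _ = |u| * |u ^ n - v ^ n| + |u - v| * |v| ^ n := by rw [abs_mul, abs_mul, abs_pow]
      _ ≤ 1 * (n * |u - v|) + |u - v| * 1 :=
          add_le_add (mul_le_mul hu ih (abs_nonneg _) zero_le_one)
            (mul_le_mul_of_nonneg_left (pow_le_one₀ (abs_nonneg v) hv) (abs_nonneg _))
      _ = (n + 1 : ℕ) * |u - v| := by push_cast; ring

lemma g_lip (r d : ℕ) {y z : ℝ} (hy : y ∈ Icc (0:ℝ) 1) (hz : z ∈ Icc (0:ℝ) 1) :
    |g r d y - g r d z| ≤ ((r : ℝ) * d) * |y - z| := by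
  obtain ⟨hy0, hy1⟩ := hy
  obtain ⟨hz0, hz1⟩ := hz
  have hay : |1 - (1 - y) ^ r| ≤ 1 := by
    rw [abs_le]
    have := pow_nonneg (by linarith : (0:ℝ) ≤ 1 - y) r
    have := pow_le_one₀ (n := r) (by linarith : (0:ℝ) ≤ 1 - y) (by linarith : 1 - y ≤ 1)
    constructor <;> linarith
  have haz : |1 - (1 - z) ^ r| ≤ 1 := by
    rw [abs_le]
    have := pow_nonneg (by linarith : (0:ℝ) ≤ 1 - z) r
    have := pow_le_one₀ (n := r) (by linarith : (0:ℝ) ≤ 1 - z) (by linarith : 1 - z ≤ 1)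
    constructor <;> linarith
  have h1 : |g r d y - g r d z| ≤ d * |(1 - (1 - y) ^ r) - (1 - (1 - z) ^ r)| :=
    abs_pow_sub_pow_le d hay haz
  have h2 : |(1 - (1 - y) ^ r) - (1 - (1 - z) ^ r)| = |(1 - z) ^ r - (1 - y) ^ r| := by
    congr 1; ring
  have h3 : |(1 - z) ^ r - (1 - y) ^ r| ≤ r * |(1 - z) - (1 - y)| :=
    abs_pow_sub_pow_le r (by rw [abs_le]; constructor <;> linarith)
      (by rw [abs_le]; constructor <;> linarith)
  have h4 : |(1 - z) - (1 - y)| = |y - z| := by congr 1; ring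
  calc |g r d y - g r d z| ≤ d * |(1 - z) ^ r - (1 - y) ^ r| := by rw [← h2]; exact h1
    _ ≤ d * (r * |y - z|) := by
        have := h3; rw [h4] at this
        exact mul_le_mul_of_nonneg_left this (by positivity)
    _ = ((r:ℝ) * d) * |y - z| := by ring

lemma Fseq_cont (r d : ℕ) (h : ℕ) : Continuous (Fseq r d h) := by
  induction h with
  | zero => exact continuous_id
  | succ h ih =>
    have hc : Continuous fun t => (1 - (1 - Fseq r d h t) ^ r) ^ d := by fun_prop
    have hp : Continuous fun x => ∫ t in (1:ℝ)..x, (1 - (1 - Fseq r d h t) ^ r) ^ d :=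
      intervalIntegral.continuous_primitive (fun a b => hc.intervalIntegrable a b) 1
    have e : Fseq r d (h+1)
        = fun x => 1 + ∫ t in (1:ℝ)..x, (1 - (1 - Fseq r d h t) ^ r) ^ d := by
      funext x
      show (1 : ℝ) - ∫ t in x..(1:ℝ), (1 - (1 - Fseq r d h t) ^ r) ^ d = _
      rw [intervalIntegral.integral_symm]; ring
    rw [e]
    exact continuous_const.add hp

lemma Fseq_mem (r d : ℕ) (h : ℕ) : ∀ x ∈ Icc (0:ℝ) 1, Fseq r d h x ∈ Icc (0:ℝ) 1 := by
  induction h with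
  | zero => intro x hx; exact hx
  | succ h ih =>
    intro x hx
    obtain ⟨hx0, hx1⟩ := hx
    have hc : Continuous fun t => (1 - (1 - Fseq r d h t) ^ r) ^ d := by
      have := Fseq_cont r d h; fun_prop
    have hgm : ∀ t ∈ Icc x 1, (1 - (1 - Fseq r d h t) ^ r) ^ d ∈ Icc (0:ℝ) 1 := fun t ht =>
      g_mem r d (ih t ⟨le_trans hx0 ht.1, ht.2⟩)
    have h1 : 0 ≤ ∫ t in x..(1:ℝ), (1 - (1 - Fseq r d h t) ^ r) ^ d :=
      intervalIntegral.integral_nonneg hx1 (fun u hu => (hgm u hu).1)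
    have h2 : (∫ t in x..(1:ℝ), (1 - (1 - Fseq r d h t) ^ r) ^ d) ≤ ∫ _t in x..(1:ℝ), (1:ℝ) :=
      intervalIntegral.integral_mono_on hx1 (hc.intervalIntegrable _ _)
        (continuous_const.intervalIntegrable _ _) (fun t ht => (hgm t ht).2)
    rw [intervalIntegral.integral_const, smul_eq_mul, mul_one] at h2
    show (1:ℝ) - ∫ t in x..(1:ℝ), (1 - (1 - Fseq r d h t) ^ r) ^ d ∈ Icc (0:ℝ) 1
    constructor <;> [linarith; linarith]


lemma key (r d : ℕ) (h : ℕ) : ∀ x ∈ Icc (0:ℝ) 1,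
    |Fseq r d (h+1) x - Fseq r d h x| ≤ ((r:ℝ)*d)^h * (1-x)^h / h.factorial := by
  induction h with
  | zero =>
    rintro x ⟨hx0, hx1⟩
    have hgm : ∀ t ∈ Icc x 1, (1 - (1 - t)^r)^d ∈ Icc (0:ℝ) 1 := fun t ht =>
      g_mem r d ⟨le_trans hx0 ht.1, ht.2⟩
    have hc : Continuous fun t : ℝ => (1 - (1 - t)^r)^d := by fun_prop
    have h1 : 0 ≤ ∫ t in x..(1:ℝ), (1 - (1 - t)^r)^d :=
      intervalIntegral.integral_nonneg hx1 fun u hu => (hgm u hu).1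
    have h2 : (∫ t in x..(1:ℝ), (1 - (1 - t)^r)^d) ≤ ∫ _t in x..(1:ℝ), (1:ℝ) :=
      intervalIntegral.integral_mono_on hx1 (hc.intervalIntegrable _ _)
        (continuous_const.intervalIntegrable _ _) fun t ht => (hgm t ht).2
    rw [intervalIntegral.integral_const, smul_eq_mul, mul_one] at h2
    show |(1 - ∫ t in x..(1:ℝ), (1 - (1 - t)^r)^d) - x| ≤ _
    simp only [pow_zero, Nat.factorial_zero, Nat.cast_one]
    rw [abs_le]
    constructor <;> [linarith; linarith]
  | succ h ih =>
    rintro x ⟨hx0, hx1⟩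
    set L : ℝ := (r:ℝ)*d with hLdef
    have hL0 : (0:ℝ) ≤ L := by positivity
    have hconth := Fseq_cont r d h
    have hconth1 := Fseq_cont r d (h+1)
    have hch : Continuous fun t => (1 - (1 - Fseq r d h t)^r)^d := by fun_prop
    have hch1 : Continuous fun t => (1 - (1 - Fseq r d (h+1) t)^r)^d := by fun_prop
    have hsub : Fseq r d (h+1+1) x - Fseq r d (h+1) x
        = ∫ t in x..(1:ℝ), ((1 - (1 - Fseq r d h t)^r)^d - (1 - (1 - Fseq r d (h+1) t)^r)^d) := by
      show (1 - ∫ t in x..(1:ℝ), (1 - (1 - Fseq r d (h+1) t)^r)^d)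
          - (1 - ∫ t in x..(1:ℝ), (1 - (1 - Fseq r d h t)^r)^d) = _
      rw [intervalIntegral.integral_sub (hch.intervalIntegrable _ _) (hch1.intervalIntegrable _ _)]
      ring
    have hpt : ∀ t ∈ Icc x 1,
        |(1 - (1 - Fseq r d h t)^r)^d - (1 - (1 - Fseq r d (h+1) t)^r)^d|
          ≤ L^(h+1) * (1-t)^h / h.factorial := by
      intro t ht
      have ht' : t ∈ Icc (0:ℝ) 1 := ⟨le_trans hx0 ht.1, ht.2⟩
      have hlip := g_lip r d (Fseq_mem r d h t ht') (Fseq_mem r d (h+1) t ht')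
      have hih := ih t ht'
      calc |(1 - (1 - Fseq r d h t)^r)^d - (1 - (1 - Fseq r d (h+1) t)^r)^d|
          ≤ L * |Fseq r d h t - Fseq r d (h+1) t| := hlip
        _ = L * |Fseq r d (h+1) t - Fseq r d h t| := by rw [abs_sub_comm]
        _ ≤ L * (L^h * (1-t)^h / h.factorial) := mul_le_mul_of_nonneg_left hih hL0
        _ = L^(h+1) * (1-t)^h / h.factorial := by ring
    have hint1 : IntervalIntegrable
        (fun t => |(1 - (1 - Fseq r d h t)^r)^d - (1 - (1 - Fseq r d (h+1) t)^r)^d|) volume x 1 :=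
      ((hch.sub hch1).abs).intervalIntegrable _ _
    have hcb : Continuous fun t : ℝ => L^(h+1)*(1-t)^h / (h.factorial:ℝ) := by fun_prop
    have hf0 : ((h.factorial : ℕ) : ℝ) ≠ 0 := Nat.cast_ne_zero.2 h.factorial_ne_zero
    have hh1 : ((h:ℝ)+1) ≠ 0 := by positivity
    have hpow : (∫ t in x..(1:ℝ), (1-t)^h) = (1-x)^(h+1) / ((h:ℝ)+1) := by
      rw [intervalIntegral.integral_comp_sub_left (fun u : ℝ => u^h) 1, integral_pow]
      norm_num
    have hcalc : (∫ t in x..(1:ℝ), L^(h+1)*(1-t)^h/(h.factorial:ℝ))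
        = L^(h+1)*(1-x)^(h+1)/((h+1).factorial:ℝ) := by
      have e : (fun t:ℝ => L^(h+1)*(1-t)^h/(h.factorial:ℝ))
          = fun t => (L^(h+1)/(h.factorial:ℝ)) * (1-t)^h := by funext t; ring
      rw [e, intervalIntegral.integral_const_mul, hpow, Nat.factorial_succ,
        div_mul_div_comm]
      push_cast
      ring_nf
    rw [hsub]
    calc |∫ t in x..(1:ℝ), ((1 - (1 - Fseq r d h t)^r)^d - (1 - (1 - Fseq r d (h+1) t)^r)^d)|
        ≤ ∫ t in x..(1:ℝ),
            |(1 - (1 - Fseq r d h t)^r)^d - (1 - (1 - Fseq r d (h+1) t)^r)^d| :=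
          intervalIntegral.abs_integral_le_integral_abs hx1
      _ ≤ ∫ t in x..(1:ℝ), L^(h+1)*(1-t)^h/(h.factorial:ℝ) :=
          intervalIntegral.integral_mono_on hx1 hint1 (hcb.intervalIntegrable _ _) hpt
      _ = L^(h+1)*(1-x)^(h+1)/((h+1).factorial:ℝ) := hcalc

end FseqAux

theorem Fseq_limit_and_fixed_point (r d : ℕ) (hr : 1 ≤ r) (hd : 1 ≤ d) :
    ∃ F : ℝ → ℝ, ∀ x ∈ Set.Icc (0 : ℝ) 1,
      F x ∈ Set.Icc (0 : ℝ) 1 ∧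
      Filter.Tendsto (fun h : ℕ => Fseq r d h x) Filter.atTop (nhds (F x)) ∧
      F x = 1 - ∫ t in x..(1 : ℝ), (1 - (1 - F t) ^ r) ^ d := by
  classical
  set L : ℝ := (r:ℝ)*d with hLdef
  have hL0 : (0:ℝ) ≤ L := by positivity
  have hdist : ∀ x ∈ Icc (0:ℝ) 1, ∀ h : ℕ,
      dist (Fseq r d h x) (Fseq r d (h+1) x) ≤ L^h / h.factorial := by
    intro x hx h
    rw [dist_comm, Real.dist_eq]
    have hb := FseqAux.key r d h x hx
    have h1 : (1-x)^h ≤ 1 := pow_le_one₀ (by linarith [hx.2]) (by linarith [hx.1])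
    calc |Fseq r d (h+1) x - Fseq r d h x| ≤ L^h * (1-x)^h / h.factorial := hb
      _ ≤ L^h * 1 / h.factorial := by gcongr
      _ = L^h / h.factorial := by rw [mul_one]
  have hsum : Summable (fun h : ℕ => L^h / h.factorial) := Real.summable_pow_div_factorial L
  set F : ℝ → ℝ := fun x => limUnder atTop (fun h => Fseq r d h x) with hFdef
  have htend : ∀ x ∈ Icc (0:ℝ) 1, Tendsto (fun h => Fseq r d h x) atTop (𝓝 (F x)) := by
    intro x hx
    have hc : CauchySeq (fun h => Fseq r d h x) :=
      cauchySeq_of_dist_le_of_summable _ (hdist x hx) hsum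
    exact tendsto_nhds_limUnder (cauchySeq_tendsto_of_complete hc)
  set eps : ℕ → ℝ := fun n => ∑' m, L^(m+n) / (m+n).factorial with hepsdef
  have heps0 : Tendsto eps atTop (𝓝 0) := by
    rw [hepsdef]
    exact tendsto_sum_nat_add fun j : ℕ => L^j / j.factorial
  have hepsnn : ∀ n, 0 ≤ eps n := fun n => tsum_nonneg (fun m => by positivity)
  have htail : ∀ x ∈ Icc (0:ℝ) 1, ∀ n, |Fseq r d n x - F x| ≤ eps n := by
    intro x hx n
    have hds := dist_le_tsum_of_dist_le_of_tendsto (fun h => L^h / h.factorial)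
      (hdist x hx) hsum (htend x hx) n
    rw [Real.dist_eq] at hds
    refine hds.trans (le_of_eq ?_)
    exact tsum_congr fun m => by rw [add_comm n m]
  have hmem : ∀ x ∈ Icc (0:ℝ) 1, F x ∈ Icc (0:ℝ) 1 := fun x hx =>
    isClosed_Icc.mem_of_tendsto (htend x hx)
      (Filter.Eventually.of_forall fun h => FseqAux.Fseq_mem r d h x hx)
  refine ⟨F, fun x hx => ⟨hmem x hx, htend x hx, ?_⟩⟩
  obtain ⟨hx0, hx1⟩ := hx
  have hmeasF : AEMeasurable F (volume.restrict (Ioc x 1)) := by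
    refine aemeasurable_of_tendsto_metrizable_ae'
      (fun h => ((FseqAux.Fseq_cont r d h).measurable).aemeasurable) ?_
    filter_upwards [ae_restrict_mem measurableSet_Ioc] with t ht
    exact htend t ⟨le_trans hx0 ht.1.le, ht.2⟩
  have hFmem' : ∀ t ∈ Icc (0:ℝ) 1, (1 - (1 - F t)^r)^d ∈ Icc (0:ℝ) 1 := fun t ht =>
    FseqAux.g_mem r d (hmem t ht)
  have hintF : IntervalIntegrable (fun t => (1 - (1 - F t)^r)^d) volume x 1 := by
    rw [intervalIntegrable_iff_integrableOn_Ioc_of_le hx1]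
    have hm : AEStronglyMeasurable (fun t => (1 - (1 - F t)^r)^d)
        (volume.restrict (Ioc x 1)) :=
      ((FseqAux.g_cont r d).measurable.comp_aemeasurable hmeasF).aestronglyMeasurable
    refine Integrable.mono' (integrable_const 1) hm ?_
    filter_upwards [ae_restrict_mem measurableSet_Ioc] with t ht
    have hFt := hFmem' t ⟨le_trans hx0 ht.1.le, ht.2⟩
    rw [Real.norm_eq_abs, abs_le]
    exact ⟨by linarith [hFt.1], hFt.2⟩
  have hconv : Tendsto (fun h : ℕ => ∫ t in x..(1:ℝ), (1 - (1 - Fseq r d h t)^r)^d)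
      atTop (𝓝 (∫ t in x..(1:ℝ), (1 - (1 - F t)^r)^d)) := by
    rw [← tendsto_sub_nhds_zero_iff]
    refine squeeze_zero_norm (a := fun h => L * eps h) (fun h => ?_) ?_
    · have hinth : IntervalIntegrable (fun t => (1 - (1 - Fseq r d h t)^r)^d) volume x 1 := by
        have hc : Continuous fun t => (1 - (1 - Fseq r d h t)^r)^d := by
          have := FseqAux.Fseq_cont r d h; fun_prop
        exact hc.intervalIntegrable _ _
      rw [← intervalIntegral.integral_sub hinth hintF]
      refine le_trans (intervalIntegral.norm_integral_le_of_norm_le_const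
        (C := L * eps h) ?_) ?_
      · intro t ht
        rw [Set.uIoc_of_le hx1] at ht
        have ht' : t ∈ Icc (0:ℝ) 1 := ⟨le_trans hx0 ht.1.le, ht.2⟩
        have hlip := FseqAux.g_lip r d (FseqAux.Fseq_mem r d h t ht') (hmem t ht')
        have htl := htail t ht' h
        rw [Real.norm_eq_abs]
        calc |(1 - (1 - Fseq r d h t)^r)^d - (1 - (1 - F t)^r)^d|
            ≤ L * |Fseq r d h t - F t| := hlip
          _ ≤ L * eps h := mul_le_mul_of_nonneg_left htl hL0
      · have habs : |1 - x| ≤ 1 := by rw [abs_le]; constructor <;> linarith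
        calc L * eps h * |1 - x| ≤ L * eps h * 1 :=
              mul_le_mul_of_nonneg_left habs (mul_nonneg hL0 (hepsnn h))
          _ = L * eps h := mul_one _
    · simpa using heps0.const_mul L
  have h1 : Tendsto (fun h : ℕ => Fseq r d (h+1) x) atTop (𝓝 (F x)) :=
    (htend x ⟨hx0, hx1⟩).comp (tendsto_add_atTop_nat 1)
  have h2 : Tendsto (fun h : ℕ => Fseq r d (h+1) x) atTop
      (𝓝 (1 - ∫ t in x..(1:ℝ), (1 - (1 - F t)^r)^d)) := by
    have he : (fun h : ℕ => Fseq r d (h+1) x)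
        = fun h => 1 - ∫ t in x..(1:ℝ), (1 - (1 - Fseq r d h t)^r)^d := rfl
    rw [he]
    exact tendsto_const_nhds.sub hconv
  exact tendsto_nhds_unique h1 h2
end

section
/- Let r ≥ 1 and d ≥ 3 be integers, and suppose G : [0,1] → [0,1] satisfies G(x) = ∫_x^1 (1 − G(t)^r)^{d−1} dt for all x ∈ [0,1]. Then ∑_{n≥0} C(n+d−2, d−2)·G(x)^{rn+1}/(rn+1) = 1 − x for all x ∈ [0,1]. -/
/-!
With `φ y = (1 - y ^ r) ^ (d - 1)`, the equation says `G' = -φ ∘ G` on `(0, 1)` and `G 1 = 0`.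
Separating variables gives `∫₀^{G x} φ⁻¹ = 1 - x`, and expanding `φ⁻¹` in the negative binomial
series and integrating termwise turns the left side into the series. This needs `G < 1`, where
`φ ≠ 0`: were `G x = 1`, then `1 = ∫ₓ¹ φ ∘ G < 1 - x` since `φ ∘ G ≤ 1` with `φ (G x) = 0`.
It also needs `φ ∘ G` to be measurable, because the integral of a non-measurable function is `0`:
on the initial segment of `[0, 1]` where measurability on `(x, 1]` fails, `G = 0` and `φ ∘ G` is
the constant `φ 0`.
-/

open MeasureTheory Set Filter Topology

section Measurability

variable {β : Type*} [TopologicalSpace β] [TopologicalSpace.PseudoMetrizableSpace β]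
  {f : ℝ → β} {a b : ℝ}

theorem aestronglyMeasurable_restrict_Ioc_of_forall_lt
    (hf : ∀ y, a < y → AEStronglyMeasurable f (volume.restrict (Ioc y b))) :
    AEStronglyMeasurable f (volume.restrict (Ioc a b)) := by
  have hunion : Ioc a b = ⋃ n : ℕ, Ioc (a + 1 / (n + 1)) b := by
    ext t
    simp only [mem_Ioc, mem_iUnion]
    constructor
    · rintro ⟨hat, htb⟩
      obtain ⟨n, hn⟩ := exists_nat_one_div_lt (sub_pos.2 hat)
      exact ⟨n, by linarith, htb⟩
    · rintro ⟨n, hnt, htb⟩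
      exact ⟨lt_of_le_of_lt (le_add_of_nonneg_right (by positivity)) hnt, htb⟩
  rw [hunion, aestronglyMeasurable_iUnion_iff]
  exact fun n => hf _ (lt_add_of_pos_right a (by positivity))

theorem aestronglyMeasurable_restrict_Ioc_of_eq_const (c : β)
    (hf : ∀ x ∈ Ioo a b, ¬AEStronglyMeasurable f (volume.restrict (Ioc x b)) → f x = c) :
    AEStronglyMeasurable f (volume.restrict (Ioc a b)) := by
  rcases lt_or_ge b a with hba | hab
  · rw [Ioc_eq_empty hba.not_gt, Measure.restrict_empty]
    exact aestronglyMeasurable_zero_measure f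
  set A := {x ∈ Icc a b | AEStronglyMeasurable f (volume.restrict (Ioc x b))}
  have hbA : b ∈ A := ⟨right_mem_Icc.2 hab, by simp⟩
  have hA : BddBelow A := ⟨a, fun x hx => hx.1.1⟩
  set s := sInf A
  have has : a ≤ s := le_csInf ⟨b, hbA⟩ fun x hx => hx.1.1
  have hsb : s ≤ b := csInf_le hA hbA
  have hs : AEStronglyMeasurable f (volume.restrict (Ioc s b)) := by
    refine aestronglyMeasurable_restrict_Ioc_of_forall_lt fun y hy => ?_
    obtain ⟨x, hxA, hxy⟩ := exists_lt_of_csInf_lt ⟨b, hbA⟩ hy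
    exact hxA.2.mono_measure (Measure.restrict_mono (Ioc_subset_Ioc_left hxy.le) le_rfl)
  have hconst : ∀ x ∈ Ioo a s, f x = c := fun x hx =>
    hf x ⟨hx.1, hx.2.trans_le hsb⟩ fun hmeas =>
      (csInf_le hA ⟨⟨hx.1.le, (hx.2.trans_le hsb).le⟩, hmeas⟩).not_gt hx.2
  rw [← Ioc_union_Ioc_eq_Ioc has hsb, aestronglyMeasurable_union_iff,
    Measure.restrict_congr_set Ioo_ae_eq_Ioc.symm]
  refine ⟨(aestronglyMeasurable_const (b := c)).congr ?_, hs⟩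
  exact (ae_restrict_iff' measurableSet_Ioo).2 (ae_of_all _ fun x hx => (hconst x hx).symm)

end Measurability

section IntegralEquation

variable {φ G g : ℝ → ℝ} {a b : ℝ}

theorem aestronglyMeasurable_comp_of_eq_integral
    (hG : ∀ x ∈ Icc a b, G x = ∫ t in x..b, φ (G t)) :
    AEStronglyMeasurable (fun t => φ (G t)) (volume.restrict (Ioc a b)) :=
  aestronglyMeasurable_restrict_Ioc_of_eq_const (φ 0) fun x hx hmeas => by
    rw [hG x (Ioo_subset_Icc_self hx), intervalIntegral.integral_of_le hx.2.le,
      integral_non_aestronglyMeasurable hmeas]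

theorem integrableOn_comp_of_eq_integral (hG : ∀ x ∈ Icc a b, G x = ∫ t in x..b, φ (G t))
    {C : ℝ} (hbdd : ∀ t ∈ Ioc a b, ‖φ (G t)‖ ≤ C) :
    IntegrableOn (fun t => φ (G t)) (Icc a b) :=
  (integrableOn_Icc_iff_integrableOn_Ioc).2 <|
    IntegrableOn.of_bound measure_Ioc_lt_top (aestronglyMeasurable_comp_of_eq_integral hG) C
      ((ae_restrict_iff' measurableSet_Ioc).2 (ae_of_all _ hbdd))

theorem continuousOn_of_eq_integral (hG : ∀ x ∈ Icc a b, G x = ∫ t in x..b, g t)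
    (hg : IntegrableOn g (Icc a b)) : ContinuousOn G (Icc a b) := by
  rcases le_total a b with hab | hba
  · have := intervalIntegral.continuousOn_primitive_interval_left (μ := volume)
      (by rwa [uIcc_of_le hab])
    rw [uIcc_of_le hab] at this
    exact this.congr hG
  · exact (subsingleton_Icc_of_ge hba).continuousOn G

theorem hasDerivAt_of_eq_integral (hG : ∀ x ∈ Icc a b, G x = ∫ t in x..b, g t)
    (hg : ContinuousOn g (Icc a b)) {t : ℝ} (ht : t ∈ Ioo a b) : HasDerivAt G (-g t) t := by
  have hnhds : Icc a b ∈ 𝓝 t := Icc_mem_nhds ht.1 ht.2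
  refine (intervalIntegral.integral_hasDerivAt_left ?_ ?_
    (hg.continuousAt hnhds)).congr_of_eventuallyEq (eventually_of_mem hnhds hG)
  · exact (hg.mono (Icc_subset_Icc_left ht.1.le)).intervalIntegrable_of_Icc ht.2.le
  · exact (hg.mono Ioo_subset_Icc_self).stronglyMeasurableAtFilter isOpen_Ioo t ht

theorem integral_inv_eq_sub_of_eq_integral (hφ : Continuous φ)
    (hG : ∀ x ∈ Icc a b, G x = ∫ t in x..b, φ (G t)) (hGc : ContinuousOn G (Icc a b))
    {x : ℝ} (hx : x ∈ Icc a b) (hφG : ∀ t ∈ Icc x b, φ (G t) ≠ 0) :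
    ∫ y in (0 : ℝ)..G x, (φ y)⁻¹ = b - x := by
  have hxb : Icc x b ⊆ Icc a b := Icc_subset_Icc_left hx.1
  have hφGc : ContinuousOn (fun t => φ (G t)) (Icc a b) := hφ.comp_continuousOn hGc
  have hsubst := intervalIntegral.integral_comp_mul_deriv'' (f := G) (f' := fun t => -φ (G t))
    (g := fun y => (φ y)⁻¹) (by rw [uIcc_of_le hx.2]; exact hGc.mono hxb)
    (fun t ht => by
      rw [min_eq_left hx.2, max_eq_right hx.2] at ht
      exact (hasDerivAt_of_eq_integral hG hφGc ⟨hx.1.trans_lt ht.1, ht.2⟩).hasDerivWithinAt)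
    (by rw [uIcc_of_le hx.2]; exact (hφGc.mono hxb).neg)
    (by
      rw [uIcc_of_le hx.2]
      rintro _ ⟨t, ht, rfl⟩
      exact (hφ.continuousAt.inv₀ (hφG t ht)).continuousWithinAt)
  have hGb : G b = 0 := by
    rw [hG b (right_mem_Icc.2 (hx.1.trans hx.2)), intervalIntegral.integral_same]
  have hintegrand : EqOn (fun t => ((fun y => (φ y)⁻¹) ∘ G) t * -φ (G t)) (fun _ => -1)
      (uIcc x b) := fun t ht => by
    rw [uIcc_of_le hx.2] at ht
    simp [inv_mul_cancel₀ (hφG t ht)]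
  rw [intervalIntegral.integral_congr hintegrand, hGb, intervalIntegral.integral_symm 0 (G x)]
    at hsubst
  simp only [intervalIntegral.integral_const, smul_eq_mul, mul_neg, mul_one] at hsubst
  linarith

theorem lt_one_of_eq_integral (hφ : Continuous φ)
    (hG : ∀ x ∈ Icc 0 1, G x = ∫ t in x..1, φ (G t)) (hGc : ContinuousOn G (Icc 0 1))
    (hφG : ∀ t ∈ Icc 0 1, φ (G t) ≤ 1) (hφ1 : φ 1 < 1) {x : ℝ} (hx : x ∈ Icc 0 1)
    (hGx : G x ≤ 1) : G x < 1 := by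
  refine hGx.lt_of_ne fun hGx1 => ?_
  have hG1 : G 1 = 0 := by
    rw [hG 1 (right_mem_Icc.2 zero_le_one), intervalIntegral.integral_same]
  have hx1 : x < 1 := hx.2.lt_of_ne (by rintro rfl; simp [hG1] at hGx1)
  have hlt := intervalIntegral.integral_lt_integral_of_continuousOn_of_le_of_exists_lt
    (f := fun t => φ (G t)) hx1
    (hφ.comp_continuousOn (hGc.mono (Icc_subset_Icc_left hx.1))) continuousOn_const
    (fun t ht => hφG t ⟨hx.1.trans ht.1.le, ht.2⟩) ⟨x, left_mem_Icc.2 hx1.le, by rwa [hGx1]⟩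
  rw [← hG x hx, intervalIntegral.integral_const, smul_eq_mul, mul_one, hGx1] at hlt
  linarith [hx.1]

end IntegralEquation

theorem hasSum_choose_mul_pow_div_eq_integral (k : ℕ) {r : ℕ} (hr : 0 < r) {y : ℝ}
    (hy0 : 0 ≤ y) (hy1 : y < 1) :
    HasSum (fun n : ℕ => ((n + k).choose k : ℝ) * y ^ (r * n + 1) / (r * n + 1))
      (∫ t in (0 : ℝ)..y, ((1 - t ^ r) ^ (k + 1))⁻¹) := by
  set F : ℕ → ℝ → ℝ := fun n t => ((n + k).choose k : ℝ) * t ^ (r * n)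
  have hgeom : ∀ t ∈ Icc 0 y, HasSum (fun n => F n t) ((1 - t ^ r) ^ (k + 1))⁻¹ := by
    intro t ht
    have htr : ‖t ^ r‖ < 1 := by
      rw [Real.norm_of_nonneg (pow_nonneg ht.1 r)]
      exact pow_lt_one₀ ht.1 (ht.2.trans_lt hy1) hr.ne'
    simpa [F, pow_mul] using hasSum_choose_mul_geometric_of_norm_lt_one k htr
  have hterm : ∀ n : ℕ, ∫ t in (0 : ℝ)..y, F n t
      = ((n + k).choose k : ℝ) * y ^ (r * n + 1) / (r * n + 1) := by
    intro n
    rw [intervalIntegral.integral_const_mul, integral_pow, zero_pow (Nat.succ_ne_zero _),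
      sub_zero]
    push_cast
    ring
  have hIoc : ∀ t ∈ uIoc 0 y, t ∈ Icc 0 y := fun t ht =>
    Ioc_subset_Icc_self (by rwa [uIoc_of_le hy0] at ht)
  simp_rw [← hterm]
  refine intervalIntegral.hasSum_integral_of_dominated_convergence F
    (fun n => (by fun_prop : Continuous (F n)).aestronglyMeasurable)
    (fun n => ae_of_all _ fun t ht =>
      (Real.norm_of_nonneg (mul_nonneg (Nat.cast_nonneg _) (pow_nonneg (hIoc t ht).1 _))).le)
    (ae_of_all _ fun t ht => (hgeom t (hIoc t ht)).summable) ?_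
    (ae_of_all _ fun t ht => hgeom t (hIoc t ht))
  refine ContinuousOn.intervalIntegrable ?_
  rw [uIcc_of_le hy0]
  refine ContinuousOn.congr ?_ fun t ht => (hgeom t ht).tsum_eq
  refine ContinuousOn.inv₀ (by fun_prop) fun t ht => pow_ne_zero _ (sub_pos.2 ?_).ne'
  exact pow_lt_one₀ ht.1 (ht.2.trans_lt hy1) hr.ne'

theorem series_equation_for_G (r d : ℕ) (hr : 1 ≤ r) (hd : 3 ≤ d)
    (G : ℝ → ℝ)
    (hrange : ∀ x ∈ Set.Icc (0 : ℝ) 1, G x ∈ Set.Icc (0 : ℝ) 1)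
    (hG : ∀ x ∈ Set.Icc (0 : ℝ) 1, G x = ∫ t in x..(1 : ℝ), (1 - G t ^ r) ^ (d - 1)) :
    ∀ x ∈ Set.Icc (0 : ℝ) 1,
      ∑' m : ℕ, ((m + d - 2).choose (d - 2) : ℝ) * G x ^ (r * m + 1) / (r * m + 1) = 1 - x := by
  obtain ⟨k, rfl⟩ : ∃ k, d = k + 2 := ⟨d - 2, by omega⟩
  simp only [show ∀ m, m + (k + 2) - 2 = m + k by omega, Nat.add_sub_cancel,
    show k + 2 - 1 = k + 1 by omega] at hG ⊢
  set φ : ℝ → ℝ := fun y => (1 - y ^ r) ^ (k + 1)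
  have hφ : Continuous φ := by fun_prop
  have hφG : ∀ t ∈ Icc (0 : ℝ) 1, φ (G t) ∈ Icc (0 : ℝ) 1 := fun t ht => by
    obtain ⟨h0, h1⟩ := hrange t ht
    have h0r : 0 ≤ G t ^ r := pow_nonneg h0 r
    have h1r : G t ^ r ≤ 1 := pow_le_one₀ h0 h1
    exact ⟨pow_nonneg (by linarith) _, pow_le_one₀ (by linarith) (by linarith)⟩
  have hGc : ContinuousOn G (Icc 0 1) :=
    continuousOn_of_eq_integral hG <| integrableOn_comp_of_eq_integral hG (C := 1) fun t ht => by
      rw [Real.norm_of_nonneg (hφG t (Ioc_subset_Icc_self ht)).1]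
      exact (hφG t (Ioc_subset_Icc_self ht)).2
  have hlt : ∀ x ∈ Icc (0 : ℝ) 1, G x < 1 := fun x hx =>
    lt_one_of_eq_integral hφ hG hGc (fun t ht => (hφG t ht).2) (by simp [φ]) hx (hrange x hx).2
  intro x hx
  rw [(hasSum_choose_mul_pow_div_eq_integral k hr (hrange x hx).1 (hlt x hx)).tsum_eq]
  refine integral_inv_eq_sub_of_eq_integral hφ hG hGc hx fun t ht => ?_
  have ht' : t ∈ Icc (0 : ℝ) 1 := ⟨hx.1.trans ht.1, ht.2⟩
  exact pow_ne_zero _ (sub_pos.2 (pow_lt_one₀ (hrange t ht').1 (hlt t ht') (by omega))).ne'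
end

section
/- For all integers r ≥ 1 and d ≥ 2, there exists exactly one positive real number u for which the series ∑_{n≥0} C(n+d−2, d−2)·u^{rn+1}/(rn+1) converges with sum equal to 1; moreover this u lies in the open interval (0,1). -/
open Set Filter Finset

private noncomputable def Tm (r k : ℕ) (u : ℝ) (m : ℕ) : ℝ :=
  ((m + k).choose k : ℝ) * u ^ (r * m + 1) / (r * m + 1)

private lemma Tm_nonneg (r k : ℕ) {u : ℝ} (hu : 0 ≤ u) (m : ℕ) : 0 ≤ Tm r k u m := by
  unfold Tm; positivity

private lemma denom_pos (r m : ℕ) : (0:ℝ) < (r:ℝ) * m + 1 := by positivity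

/-- non-summability of `1/(r m + 1)` -/
private lemma not_summable_inv (r : ℕ) :
    ¬ Summable (fun m : ℕ => 1 / ((r:ℝ) * m + 1)) := by
  intro h
  have h2 : Summable (fun m : ℕ => ((r:ℝ) + 1)⁻¹ * (1 / ((m:ℝ) + 1))) := by
    refine Summable.of_nonneg_of_le (fun m => by positivity) (fun m => ?_) h
    have hm : (0:ℝ) ≤ (m:ℝ) := Nat.cast_nonneg m
    have hrr : (0:ℝ) ≤ (r:ℝ) := Nat.cast_nonneg r
    have hle : ((r:ℝ) * m + 1) ≤ ((r:ℝ) + 1) * ((m:ℝ) + 1) := by nlinarith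
    calc ((r:ℝ) + 1)⁻¹ * (1 / ((m:ℝ) + 1)) = (((r:ℝ) + 1) * ((m:ℝ) + 1))⁻¹ := by
          rw [one_div, mul_inv]
      _ ≤ ((r:ℝ) * m + 1)⁻¹ := inv_anti₀ (denom_pos r m) hle
      _ = 1 / ((r:ℝ) * m + 1) := (one_div _).symm
  have h3 : Summable (fun m : ℕ => 1 / ((m:ℝ) + 1)) :=
    (summable_mul_left_iff (a := ((r:ℝ) + 1)⁻¹) (by positivity)).mp h2
  have h4 : Summable (fun n : ℕ => 1 / (n:ℝ)) := by
    rw [← summable_nat_add_iff 1]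
    exact h3.congr (fun n => by push_cast; ring_nf)
  exact Real.not_summable_one_div_natCast h4

/-- summable dominating series -/
private lemma summable_bound (k : ℕ) {b : ℝ} (hb0 : 0 < b) (hb1 : b < 1) :
    Summable (fun m : ℕ => ((m:ℝ) + k) ^ k * b ^ m) := by
  have h := summable_pow_mul_geometric_of_norm_lt_one (R := ℝ) k
    (by rwa [Real.norm_eq_abs, abs_of_pos hb0])
  have h1 : Summable (fun m : ℕ => (((m + k : ℕ)):ℝ) ^ k * b ^ (m + k)) :=
    (summable_nat_add_iff k).mpr h
  have h2 := h1.mul_left (1 / b ^ k)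
  refine h2.congr (fun m => ?_)
  push_cast
  field_simp
  ring

private lemma Tm_le_bound (r k : ℕ) (hr : 1 ≤ r) {u b : ℝ} (hb1 : b < 1)
    (hu : u ∈ Set.Icc 0 b) (m : ℕ) : Tm r k u m ≤ ((m:ℝ) + k) ^ k * b ^ m := by
  obtain ⟨hu0, hub⟩ := hu
  have hb0 : 0 ≤ b := le_trans hu0 hub
  unfold Tm
  have h1 : ((m + k).choose k : ℝ) ≤ ((m:ℝ) + k) ^ k := by
    calc ((m + k).choose k : ℝ) ≤ (((m + k) ^ k : ℕ) : ℝ) := by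
          exact_mod_cast Nat.choose_le_pow (m + k) k
      _ = ((m:ℝ) + k) ^ k := by push_cast; ring
  have h2 : u ^ (r * m + 1) ≤ b ^ m := by
    calc u ^ (r * m + 1) ≤ b ^ (r * m + 1) := pow_le_pow_left₀ hu0 hub _
      _ ≤ b ^ m := pow_le_pow_of_le_one hb0 hb1.le
        (le_trans (Nat.le_mul_of_pos_left m hr) (Nat.le_succ _))
  rw [div_le_iff₀ (denom_pos r m)]
  have hc : (0:ℝ) ≤ ((m + k).choose k : ℝ) := Nat.cast_nonneg _
  have hu' : 0 ≤ u ^ (r * m + 1) := pow_nonneg hu0 _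
  calc ((m + k).choose k : ℝ) * u ^ (r * m + 1)
      ≤ ((m:ℝ) + k) ^ k * b ^ m :=
        mul_le_mul h1 h2 hu' (by positivity)
    _ ≤ ((m:ℝ) + k) ^ k * b ^ m * ((r:ℝ) * m + 1) := by
        have hX : (0:ℝ) ≤ ((m:ℝ) + k) ^ k * b ^ m := by positivity
        have hrm : (0:ℝ) ≤ (r:ℝ) * m := by positivity
        nlinarith [mul_nonneg hX hrm]

private lemma summable_Tm (r k : ℕ) (hr : 1 ≤ r) {u : ℝ} (hu0 : 0 ≤ u) (hu1 : u < 1) :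
    Summable (Tm r k u) := by
  obtain ⟨b, hub, hb1⟩ := exists_between hu1
  have hb0 : 0 < b := lt_of_le_of_lt hu0 hub
  exact (summable_bound k hb0 hb1).of_nonneg_of_le (Tm_nonneg r k hu0)
    (Tm_le_bound r k hr hb1 ⟨hu0, hub.le⟩)

private lemma not_summable_Tm (r k : ℕ) {u : ℝ} (hu : 1 ≤ u) :
    ¬ Summable (Tm r k u) := by
  intro h
  refine not_summable_inv r ?_
  refine h.of_nonneg_of_le (fun m => by positivity) (fun m => ?_)
  unfold Tm
  rw [div_le_div_iff₀ (denom_pos r m) (denom_pos r m)]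
  have h1 : (1:ℝ) ≤ ((m + k).choose k : ℝ) := by
    exact_mod_cast Nat.one_le_iff_ne_zero.mpr (Nat.choose_pos (Nat.le_add_left k m)).ne'
  have h2 : (1:ℝ) ≤ u ^ (r * m + 1) := one_le_pow₀ hu
  have h12 : (1:ℝ) ≤ ((m + k).choose k : ℝ) * u ^ (r * m + 1) := by nlinarith
  nlinarith [mul_le_mul_of_nonneg_right h12 (denom_pos r m).le]

private lemma Tm_strictMono (r k : ℕ) (hr : 1 ≤ r) {u v : ℝ} (hu0 : 0 ≤ u) (huv : u < v)
    (hv1 : v < 1) : ∑' m, Tm r k u m < ∑' m, Tm r k v m := by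
  have hv0 : 0 ≤ v := le_of_lt (lt_of_le_of_lt hu0 huv)
  have hval : ∀ w : ℝ, Tm r k w 0 = w := by
    intro w; simp [Tm]
  refine Summable.tsum_lt_tsum (i := 0) (fun m => ?_) ?_
    (summable_Tm r k hr hu0 (lt_trans huv hv1)) (summable_Tm r k hr hv0 hv1)
  · unfold Tm
    gcongr
  · rw [hval, hval]; exact huv

private lemma Tm_zero (r k : ℕ) : ∑' m, Tm r k (0:ℝ) m = 0 := by
  have : ∀ m, Tm r k (0:ℝ) m = 0 := by
    intro m; unfold Tm
    rw [zero_pow (Nat.succ_ne_zero _)]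
    simp
  simp [this]

/-- there is b ∈ (0,1) with ∑ Tm b ≥ 1 -/
private lemma exists_big (r k : ℕ) (hr : 1 ≤ r) :
    ∃ b : ℝ, 0 < b ∧ b < 1 ∧ 1 ≤ ∑' m, Tm r k b m := by
  -- partial sums of 1/(rm+1) are unbounded
  have hdiv := (not_summable_iff_tendsto_nat_atTop_of_nonneg
    (f := fun m : ℕ => 1 / ((r:ℝ) * m + 1)) (fun m => by positivity)).mp (not_summable_inv r)
  obtain ⟨N, hN⟩ := (hdiv.eventually_ge_atTop (2:ℝ)).exists
  set K := r * N + 1 with hK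
  set b : ℝ := (2⁻¹ : ℝ) ^ ((K:ℝ)⁻¹) with hbdef
  have hb0 : 0 < b := Real.rpow_pos_of_pos (by norm_num) _
  have hb1 : b < 1 := Real.rpow_lt_one (by norm_num) (by norm_num) (by positivity)
  have hbK : b ^ K = 2⁻¹ := Real.rpow_inv_natCast_pow (by norm_num) (Nat.succ_ne_zero _)
  refine ⟨b, hb0, hb1, ?_⟩
  have hsum : Summable (Tm r k b) := summable_Tm r k hr hb0.le hb1
  have step1 : ∑ m ∈ Finset.range N, Tm r k b m ≤ ∑' m, Tm r k b m :=
    Summable.sum_le_tsum _ (fun m _ => Tm_nonneg r k hb0.le m) hsum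
  have step2 : (2⁻¹ : ℝ) * 2 ≤ ∑ m ∈ Finset.range N, Tm r k b m := by
    calc (2⁻¹ : ℝ) * 2 ≤ b ^ K * ∑ m ∈ Finset.range N, 1 / ((r:ℝ) * m + 1) := by
          rw [hbK]; exact mul_le_mul_of_nonneg_left hN (by norm_num)
      _ = ∑ m ∈ Finset.range N, b ^ K * (1 / ((r:ℝ) * m + 1)) := by rw [Finset.mul_sum]
      _ ≤ ∑ m ∈ Finset.range N, Tm r k b m := by
          refine Finset.sum_le_sum (fun m hm => ?_)
          unfold Tm
          rw [mul_one_div, div_le_div_iff₀ (denom_pos r m) (denom_pos r m)]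
          have h1 : (1:ℝ) ≤ ((m + k).choose k : ℝ) := by
            exact_mod_cast Nat.one_le_iff_ne_zero.mpr (Nat.choose_pos (Nat.le_add_left k m)).ne'
          have h2 : b ^ K ≤ b ^ (r * m + 1) := by
            refine pow_le_pow_of_le_one hb0.le hb1.le ?_
            have hmN : m < N := Finset.mem_range.mp hm
            have : r * m ≤ r * N := Nat.mul_le_mul_left r hmN.le
            omega
          have h3 : (0:ℝ) ≤ b ^ (r * m + 1) := pow_nonneg hb0.le _
          have h4 : b ^ K ≤ ((m + k).choose k : ℝ) * b ^ (r * m + 1) := by nlinarith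
          nlinarith [mul_le_mul_of_nonneg_right h4 (denom_pos r m).le]
  linarith

private lemma continuousOn_F (r k : ℕ) (hr : 1 ≤ r) {b : ℝ} (hb0 : 0 < b) (hb1 : b < 1) :
    ContinuousOn (fun u : ℝ => ∑' m, Tm r k u m) (Set.Icc 0 b) := by
  refine continuousOn_tsum (fun m => ?_) (summable_bound k hb0 hb1) (fun m u hu => ?_)
  · exact ((continuous_const.mul (continuous_pow _)).div_const _).continuousOn
  · rw [Real.norm_eq_abs, abs_of_nonneg (Tm_nonneg r k hu.1 m)]
    exact Tm_le_bound r k hr hb1 hu m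

theorem unique_positive_solution (r d : ℕ) (hr : 1 ≤ r) (hd : 2 ≤ d) :
    ∃ u : ℝ, u ∈ Set.Ioo (0 : ℝ) 1 ∧
      Summable (fun m : ℕ => ((m + d - 2).choose (d - 2) : ℝ) * u ^ (r * m + 1) / (r * m + 1)) ∧
      ∑' m : ℕ, ((m + d - 2).choose (d - 2) : ℝ) * u ^ (r * m + 1) / (r * m + 1) = 1 ∧
      ∀ u' : ℝ, 0 < u' →
        Summable (fun m : ℕ =>
          ((m + d - 2).choose (d - 2) : ℝ) * u' ^ (r * m + 1) / (r * m + 1)) →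
        ∑' m : ℕ, ((m + d - 2).choose (d - 2) : ℝ) * u' ^ (r * m + 1) / (r * m + 1) = 1 →
        u' = u := by
  set k := d - 2 with hk
  have hterm : ∀ u : ℝ,
      (fun m : ℕ => ((m + d - 2).choose (d - 2) : ℝ) * u ^ (r * m + 1) / (r * m + 1))
        = Tm r k u := by
    intro u; funext m
    unfold Tm
    rw [show m + d - 2 = m + k from by omega]
  obtain ⟨b, hb0, hb1, hbig⟩ := exists_big r k hr
  have hcont := continuousOn_F r k hr hb0 hb1
  have hmem : (1:ℝ) ∈ Set.Icc ((fun u : ℝ => ∑' m, Tm r k u m) 0)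
      ((fun u : ℝ => ∑' m, Tm r k u m) b) := by
    constructor
    · simpa [Tm_zero r k] using (zero_le_one : (0:ℝ) ≤ 1)
    · exact hbig
  obtain ⟨u, hu, hFu0⟩ := intermediate_value_Icc hb0.le hcont hmem
  have hFu : ∑' m, Tm r k u m = 1 := hFu0
  have hu1 : u < 1 := lt_of_le_of_lt hu.2 hb1
  have hu0 : 0 < u := by
    rcases lt_or_eq_of_le hu.1 with h | h
    · exact h
    · exfalso
      rw [← h] at hFu
      simp only [Tm_zero r k] at hFu
      norm_num at hFu
  refine ⟨u, ⟨hu0, hu1⟩, ?_, ?_, ?_⟩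
  · rw [hterm u]; exact summable_Tm r k hr hu0.le hu1
  · rw [hterm u]; exact hFu
  · intro u' hu'0 hsum heq
    rw [hterm u'] at hsum heq
    have hu'1 : u' < 1 := by
      by_contra h
      exact not_summable_Tm r k (le_of_not_gt h) hsum
    rcases lt_trichotomy u' u with h | h | h
    · exfalso
      have := Tm_strictMono r k hr hu'0.le h hu1
      rw [heq, hFu] at this
      exact lt_irrefl 1 this
    · exact h
    · exfalso
      have := Tm_strictMono r k hr hu0.le h hu'1
      rw [heq, hFu] at this
      exact lt_irrefl 1 this
end

section
/- Fix an integer r ≥ 1. Then u(d,r) ~ (log d / (r·d))^{1/r} as d → ∞; that is, u(d,r)·(r·d/ log d)^{1/r} → 1 as d → ∞. -/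
/-!
Write `x = u ^ r` and `n = d - 2`. Bounding the terms of the defining series above by
`u * C(m + n, n) * x ^ m`, whose sum is `u / (1 - x) ^ (n + 1)`, gives `(1 - x) ^ (n + 1) ≤ u`;
bounding them below by `u / (r x) * C(m + n, n) * x ^ (m + 1) / (m + 1)`, whose sum is
`u / (r x) * ((1 - x) ^ (-n) - 1) / n`, gives `(1 - x) ^ (-n) ≤ 1 + r n u ^ (r - 1)`. After taking
logarithms, `(1 - x) log (1 / x) ≤ r d x` and `(d - 2) x ≤ log (1 + r d x ^ (1 - 1/r))`.
The second inequality with `x ≤ 1` gives `x ≤ X := log (1 + r d) / (d - 2) = d ^ (-1 + o(1))`;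
fed back in, it gives `x ≤ (1 + o(1)) log d / (r d)`, while the first gives
`r d x ≥ (1 - X) log (1 / X) = (1 - o(1)) log d`.
-/

open Filter Real Topology

lemma hasSum_choose_mul_pow_succ_div_succ (k : ℕ) {x : ℝ} (hx : |x| < 1) :
    HasSum (fun m : ℕ => ((m + (k + 1)).choose (k + 1) : ℝ) * x ^ (m + 1) / (m + 1))
      ((((1 - x) ^ (k + 1))⁻¹ - 1) / (k + 1)) := by
  have h := hasSum_choose_mul_geometric_of_norm_lt_one k (by rwa [Real.norm_eq_abs] : ‖x‖ < 1)
  rw [← hasSum_nat_add_iff' 1] at h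
  simp only [Finset.range_one, Finset.sum_singleton, zero_add, Nat.choose_self, Nat.cast_one,
    pow_zero, mul_one, one_div] at h
  refine (h.div_const (k + 1)).congr_fun fun m => ?_
  have hchoose : ((m + (k + 1)).choose (k + 1) : ℝ) * (k + 1) =
      ((m + 1 + k).choose k) * (m + 1) := by
    have := Nat.choose_succ_right_eq (m + (k + 1)) k
    rw [show m + (k + 1) - k = m + 1 by omega] at this
    rw [show m + 1 + k = m + (k + 1) by omega]
    exact_mod_cast this
  field_simp
  linear_combination x ^ (m + 1) * hchoose

/-- The `m`-th term of the series defining `u(n + 2, r)`. -/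
noncomputable def uSeriesTerm (r n : ℕ) (u : ℝ) (m : ℕ) : ℝ :=
  ((m + n).choose n : ℝ) * u ^ (r * m + 1) / (r * m + 1)

section

variable {r n : ℕ} {u : ℝ}

lemma pow_lt_one_of_hasSum_uSeriesTerm (hr : r ≠ 0) (hu : 0 < u)
    (h : HasSum (uSeriesTerm r n u) 1) : u ^ r < 1 := by
  have hle := sum_le_hasSum (Finset.range 2) (fun m _ => by unfold uSeriesTerm; positivity) h
  have h1 : 0 < uSeriesTerm r n u 1 := by
    have := Nat.choose_pos (Nat.le_add_left n 1)
    unfold uSeriesTerm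
    positivity
  simp only [Finset.sum_range_succ, Finset.sum_range_zero, zero_add] at hle
  have h0 : uSeriesTerm r n u 0 = u := by simp [uSeriesTerm]
  exact pow_lt_one₀ hu.le (by linarith) hr

lemma one_sub_pow_pow_succ_le (hr : r ≠ 0) (hu : 0 < u) (h : HasSum (uSeriesTerm r n u) 1) :
    (1 - u ^ r) ^ (n + 1) ≤ u := by
  have hx1 := pow_lt_one_of_hasSum_uSeriesTerm hr hu h
  have hgeom := (hasSum_choose_mul_geometric_of_norm_lt_one n
    (show ‖u ^ r‖ < 1 by rwa [norm_of_nonneg (by positivity)])).mul_left u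
  have hle : 1 ≤ u * (1 / (1 - u ^ r) ^ (n + 1)) := by
    refine hasSum_le (fun m => ?_) h hgeom
    calc uSeriesTerm r n u m ≤ ((m + n).choose n : ℝ) * u ^ (r * m + 1) :=
          div_le_self (by positivity) (le_add_of_nonneg_left (by positivity))
      _ = u * (((m + n).choose n : ℝ) * (u ^ r) ^ m) := by ring
  have hpos : 0 < (1 - u ^ r) ^ (n + 1) := pow_pos (by linarith) _
  rwa [mul_one_div, le_div_iff₀ hpos, one_mul] at hle

lemma mul_inv_one_sub_pow_pow_sub_one_le {k : ℕ} (hr : 1 ≤ r) (hu : 0 < u)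
    (h : HasSum (uSeriesTerm r (k + 1) u) 1) :
    u * (((1 - u ^ r) ^ (k + 1))⁻¹ - 1) ≤ r * (k + 1) * u ^ r := by
  have hr' : (1 : ℝ) ≤ r := by exact_mod_cast hr
  have hx : |u ^ r| < 1 := by
    rw [abs_of_pos (by positivity)]; exact pow_lt_one_of_hasSum_uSeriesTerm (by omega) hu h
  have hle := hasSum_le (fun m => ?_) ((hasSum_choose_mul_pow_succ_div_succ k hx).mul_left
    (u / (r * u ^ r))) h
  · rw [div_mul_div_comm, div_le_one (by positivity)] at hle
    linarith
  · calc _ = ((m + (k + 1)).choose (k + 1) : ℝ) * u ^ (r * m + 1) / (r * (m + 1)) := by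
          field_simp; ring
      _ ≤ uSeriesTerm r (k + 1) u m := by unfold uSeriesTerm; gcongr; nlinarith

lemma one_sub_mul_neg_log_le (hr : r ≠ 0) (hu : 0 < u) (h : HasSum (uSeriesTerm r n u) 1) :
    (1 - u ^ r) * -log (u ^ r) ≤ r * (n + 1) * u ^ r := by
  have hx1 : 0 < 1 - u ^ r := sub_pos.2 (pow_lt_one_of_hasSum_uSeriesTerm hr hu h)
  have hlog := log_le_log (pow_pos hx1 _) (one_sub_pow_pow_succ_le hr hu h)
  rw [log_pow] at hlog
  have hlog_u : -((n + 1) * u ^ r) ≤ (1 - u ^ r) * log u := by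
    calc -((n + 1) * u ^ r) = (1 - u ^ r) * ((n + 1) * (1 - (1 - u ^ r)⁻¹)) := by
          field_simp; ring
      _ ≤ (1 - u ^ r) * ((n + 1) * log (1 - u ^ r)) := by
          gcongr; exact one_sub_inv_le_log_of_pos hx1
      _ ≤ (1 - u ^ r) * log u := by gcongr; exact_mod_cast hlog
  rw [log_pow]
  nlinarith [mul_le_mul_of_nonneg_left hlog_u (Nat.cast_nonneg r : (0 : ℝ) ≤ r)]

lemma mul_pow_le_log {k : ℕ} (hr : 1 ≤ r) (hu : 0 < u)
    (h : HasSum (uSeriesTerm r (k + 1) u) 1) :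
    (k + 1) * u ^ r ≤ log (1 + r * (k + 1) * u ^ (r - 1)) := by
  have hx1 : 0 < 1 - u ^ r := sub_pos.2 (pow_lt_one_of_hasSum_uSeriesTerm (by omega) hu h)
  have hbound : ((1 - u ^ r) ^ (k + 1))⁻¹ ≤ 1 + r * (k + 1) * u ^ (r - 1) := by
    have hxu : (r * (k + 1) * u ^ r : ℝ) = u * (r * (k + 1) * u ^ (r - 1)) := by
      rw [← pow_sub_one_mul (by omega : r ≠ 0) u]; ring
    have := mul_inv_one_sub_pow_pow_sub_one_le hr hu h
    rw [hxu] at this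
    linarith [le_of_mul_le_mul_left this hu]
  have hlog := log_le_log (by positivity) hbound
  rw [log_inv, log_pow] at hlog
  have := log_le_sub_one_of_pos hx1
  push_cast at hlog
  nlinarith

end

/-- `f d = d ^ (a + o(1))` as `d → ∞`. -/
def HasLogOrder (f : ℕ → ℝ) (a : ℝ) : Prop :=
  (∀ᶠ d in atTop, 0 < f d) ∧ Tendsto (fun d => log (f d) / log d) atTop (𝓝 a)

lemma tendsto_log_natCast_atTop : Tendsto (fun d : ℕ => log d) atTop atTop :=
  tendsto_log_atTop.comp tendsto_natCast_atTop_atTop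

namespace HasLogOrder

variable {f g : ℕ → ℝ} {a b : ℝ}

lemma congr' (hf : HasLogOrder f a) (h : f =ᶠ[atTop] g) : HasLogOrder g a :=
  ⟨hf.1.congr (h.mono fun _ hd => by rw [hd]),
    hf.2.congr' (h.mono fun _ hd => by simp only [hd])⟩

lemma natCast : HasLogOrder (fun d => (d : ℝ)) 1 := by
  refine ⟨(eventually_gt_atTop 0).mono fun _ => Nat.cast_pos.2, ?_⟩
  refine tendsto_const_nhds.congr' ?_
  filter_upwards [tendsto_log_natCast_atTop.eventually_gt_atTop 0] with d hd
  exact (div_self hd.ne').symm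

lemma of_tendsto {c : ℝ} (hc : 0 < c) (hf : Tendsto f atTop (𝓝 c)) : HasLogOrder f 0 :=
  ⟨hf.eventually (eventually_gt_nhds hc),
    ((continuousAt_log hc.ne').tendsto.comp hf).div_atTop tendsto_log_natCast_atTop⟩

lemma mul (hf : HasLogOrder f a) (hg : HasLogOrder g b) :
    HasLogOrder (fun d => f d * g d) (a + b) := by
  refine ⟨(hf.1.and hg.1).mono fun _ h => mul_pos h.1 h.2, (hf.2.add hg.2).congr' ?_⟩
  filter_upwards [hf.1, hg.1] with d hfd hgd
  rw [log_mul hfd.ne' hgd.ne', add_div]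

lemma natCast_sub (c : ℝ) : HasLogOrder (fun d => (d : ℝ) - c) 1 := by
  have hratio : Tendsto (fun d : ℕ => 1 - c / d) atTop (𝓝 1) := by
    simpa using (tendsto_const_div_atTop_nhds_zero_nat c).const_sub 1
  have h := natCast.mul (of_tendsto one_pos hratio)
  rw [add_zero] at h
  refine h.congr' ?_
  filter_upwards [eventually_gt_atTop 0] with d hd
  field_simp

lemma rpow (hf : HasLogOrder f a) (e : ℝ) : HasLogOrder (fun d => f d ^ e) (e * a) := by
  refine ⟨hf.1.mono fun _ h => rpow_pos_of_pos h e, (hf.2.const_mul e).congr' ?_⟩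
  filter_upwards [hf.1] with d hfd
  rw [log_rpow hfd, mul_div_assoc]

lemma inv (hf : HasLogOrder f a) : HasLogOrder (fun d => (f d)⁻¹) (-a) := by
  refine ⟨hf.1.mono fun _ h => inv_pos.2 h, hf.2.neg.congr fun d => ?_⟩
  rw [log_inv, neg_div]

lemma div (hf : HasLogOrder f a) (hg : HasLogOrder g b) :
    HasLogOrder (fun d => f d / g d) (a - b) := by
  simpa only [div_eq_mul_inv, sub_eq_add_neg] using hf.mul hg.inv

lemma tendsto_log_atTop (hf : HasLogOrder f a) (ha : 0 < a) :
    Tendsto (fun d => log (f d)) atTop atTop := by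
  refine (hf.2.pos_mul_atTop ha tendsto_log_natCast_atTop).congr' ?_
  filter_upwards [tendsto_log_natCast_atTop.eventually_gt_atTop 0] with d hd
  exact div_mul_cancel₀ _ hd.ne'

lemma tendsto_atTop (hf : HasLogOrder f a) (ha : 0 < a) : Tendsto f atTop atTop := by
  refine (tendsto_exp_atTop.comp (hf.tendsto_log_atTop ha)).congr' ?_
  filter_upwards [hf.1] with d hd
  exact exp_log hd

lemma tendsto_zero (hf : HasLogOrder f a) (ha : a < 0) : Tendsto f atTop (𝓝 0) :=
  (hf.inv.tendsto_atTop (neg_pos.2 ha)).inv_tendsto_atTop.congr fun d => inv_inv (f d)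

lemma one_add (hf : HasLogOrder f a) (ha : 0 < a) : HasLogOrder (fun d => 1 + f d) a := by
  have hf1 : ∀ᶠ d : ℕ in atTop, 1 ≤ f d := (hf.tendsto_atTop ha).eventually_ge_atTop 1
  refine ⟨hf.1.mono fun _ h => by linarith, ?_⟩
  have hupper : Tendsto (fun d : ℕ => log 2 / log d + log (f d) / log d) atTop (𝓝 (0 + a)) :=
    (tendsto_const_nhds.div_atTop tendsto_log_natCast_atTop).add hf.2
  rw [zero_add] at hupper
  refine tendsto_of_tendsto_of_tendsto_of_le_of_le' hf.2 hupper ?_ ?_ <;>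
    filter_upwards [hf1, tendsto_log_natCast_atTop.eventually_gt_atTop 0] with d hfd hd
  · gcongr; linarith
  · rw [← add_div, ← log_mul two_ne_zero (by linarith)]
    gcongr; linarith

lemma log (hf : HasLogOrder f a) (ha : 0 < a) : HasLogOrder (fun d => Real.log (f d)) 0 := by
  have hlog := hf.tendsto_log_atTop ha
  refine ⟨hlog.eventually_gt_atTop 0, ?_⟩
  have h := (isLittleO_log_id_atTop.tendsto_div_nhds_zero.comp hlog).mul hf.2
  rw [zero_mul] at h
  refine h.congr' ?_
  filter_upwards [hlog.eventually_gt_atTop 0] with d hd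
  exact div_mul_div_cancel₀ hd.ne'

end HasLogOrder

lemma one_sub_mul_neg_log_le_of_le {x y : ℝ} (hx : 0 < x) (hxy : x ≤ y) (hy : y ≤ 1) :
    (1 - y) * -log y ≤ (1 - x) * -log x := by
  gcongr
  · exact neg_nonneg.2 (log_nonpos (hx.le.trans hxy) hy)
  · linarith

lemma le_log_one_add_mul_div_sub_of_le {e r d x : ℝ} (he : 0 ≤ e) (hr : 0 ≤ r) (hd : 2 < d)
    (hx0 : 0 < x) (hx1 : x ≤ 1) (h : (d - 2) * x ≤ log (1 + r * d * x ^ e)) :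
    x ≤ log (1 + r * d) / (d - 2) := by
  rw [le_div_iff₀ (by linarith), mul_comm]
  refine h.trans (log_le_log (by positivity) ?_)
  have := mul_le_of_le_one_right (by positivity : 0 ≤ r * d) (rpow_le_one hx0.le hx1 he)
  linarith

theorem tendsto_mul_mul_div_log_of_bounds {r : ℝ} (hr : 1 ≤ r) {x : ℕ → ℝ}
    (hx : ∀ᶠ d : ℕ in atTop, 0 < x d ∧ x d ≤ 1)
    (hL : ∀ᶠ d : ℕ in atTop, (1 - x d) * -log (x d) ≤ r * d * x d)
    (hU : ∀ᶠ d : ℕ in atTop, (d - 2) * x d ≤ log (1 + r * d * x d ^ (1 - r⁻¹))) :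
    Tendsto (fun d : ℕ => x d * (r * d / log d)) atTop (𝓝 1) := by
  have hr0 : 0 < r := by linarith
  have he : 0 ≤ 1 - r⁻¹ := sub_nonneg.2 (inv_le_one_of_one_le₀ hr)
  have hconst : HasLogOrder (fun _ => r) 0 := .of_tendsto hr0 tendsto_const_nhds
  set X : ℕ → ℝ := fun d => log (1 + r * d) / (d - 2)
  have hX : HasLogOrder X (-1) := by
    have h := (((hconst.mul .natCast).one_add (by norm_num)).log (by norm_num)).div
      (.natCast_sub 2)
    simpa using h
  have hV : HasLogOrder (fun d => 1 + r * d * X d ^ (1 - r⁻¹)) r⁻¹ := by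
    have h := (hconst.mul .natCast).mul (hX.rpow (1 - r⁻¹))
    rw [show 0 + 1 + (1 - r⁻¹) * -1 = r⁻¹ by ring] at h
    exact h.one_add (inv_pos.2 hr0)
  have hxX : ∀ᶠ d : ℕ in atTop, x d ≤ X d := by
    filter_upwards [hx, hU, eventually_gt_atTop 2] with d ⟨hx0, hx1⟩ hUd hd
    exact le_log_one_add_mul_div_sub_of_le he hr0.le (by exact_mod_cast hd) hx0 hx1 hUd
  have hX0 := hX.tendsto_zero (by norm_num)
  have lower : Tendsto (fun d => (1 - X d) * (-log (X d) / log d)) atTop (𝓝 1) := by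
    have h := ((tendsto_const_nhds (x := (1 : ℝ))).sub hX0).mul hX.2.neg
    simpa [neg_div] using h
  have upper : Tendsto (fun d : ℕ => d / (d - 2) * r *
      (log (1 + r * d * X d ^ (1 - r⁻¹)) / log d)) atTop (𝓝 1) := by
    have h := ((tendsto_natCast_div_add_atTop (-2 : ℝ)).mul_const r).mul hV.2
    simpa [← sub_eq_add_neg, hr0.ne'] using h
  refine tendsto_of_tendsto_of_tendsto_of_le_of_le' lower upper ?_ ?_
  · filter_upwards [hx, hxX, hL, hX0.eventually_le_const one_pos,
      tendsto_log_natCast_atTop.eventually_gt_atTop 0] with d ⟨hx0, _⟩ hxXd hLd hX1 hd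
    rw [mul_div_assoc', mul_div_assoc', div_le_div_iff_of_pos_right hd]
    calc (1 - X d) * -log (X d) ≤ (1 - x d) * -log (x d) :=
          one_sub_mul_neg_log_le_of_le hx0 hxXd hX1
      _ ≤ r * d * x d := hLd
      _ = x d * (r * d) := by ring
  · filter_upwards [hx, hxX, hU, eventually_gt_atTop 2] with d ⟨hx0, _⟩ hxXd hUd hd
    have hd2 : (0 : ℝ) < d - 2 := by
      rw [sub_pos]; exact_mod_cast hd
    calc x d * (r * d / log d) = d / (d - 2) * r * ((d - 2) * x d / log d) := by
          field_simp
      _ ≤ d / (d - 2) * r * (log (1 + r * d * X d ^ (1 - r⁻¹)) / log d) := by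
          gcongr
          refine hUd.trans (log_le_log (by positivity) ?_)
          gcongr

lemma pow_rpow_one_sub_inv_natCast {u : ℝ} (hu : 0 ≤ u) {r : ℕ} (hr : r ≠ 0) :
    (u ^ r) ^ (1 - (r : ℝ)⁻¹) = u ^ (r - 1) := by
  rw [← rpow_natCast, ← rpow_mul hu, mul_sub, mul_one,
    mul_inv_cancel₀ (Nat.cast_ne_zero.2 hr), ← Nat.cast_pred (Nat.pos_of_ne_zero hr),
    rpow_natCast]

lemma log_bounds_of_hasSum_uSeriesTerm {r d : ℕ} (hr : 1 ≤ r) (hd : 3 ≤ d) {u : ℝ}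
    (hu : 0 < u) (h : HasSum (uSeriesTerm r (d - 2) u) 1) :
    (1 - u ^ r) * -log (u ^ r) ≤ r * d * u ^ r ∧
      (d - 2) * u ^ r ≤ log (1 + r * d * (u ^ r) ^ (1 - (r : ℝ)⁻¹)) := by
  obtain ⟨k, rfl⟩ := Nat.exists_eq_add_of_le' hd
  rw [show k + 3 - 2 = k + 1 by omega] at h
  have hd2 : ((k + 3 : ℕ) : ℝ) - 2 = k + 1 := by push_cast; ring
  constructor
  · refine (one_sub_mul_neg_log_le (by omega) hu h).trans ?_
    gcongr
    push_cast; linarith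
  · rw [pow_rpow_one_sub_inv_natCast hu.le (by omega), hd2]
    refine (mul_pow_le_log hr hu h).trans (log_le_log (by positivity) ?_)
    gcongr
    push_cast; linarith

theorem u_asymptotics (r : ℕ) (hr : 1 ≤ r) (u : ℕ → ℝ)
    (hu : ∀ d : ℕ, 2 ≤ d → 0 < u d ∧
      Summable (fun m : ℕ =>
        ((m + d - 2).choose (d - 2) : ℝ) * u d ^ (r * m + 1) / (r * m + 1)) ∧
      ∑' m : ℕ, ((m + d - 2).choose (d - 2) : ℝ) * u d ^ (r * m + 1) / (r * m + 1) = 1) :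
    Filter.Tendsto (fun d : ℕ => u d * (((r : ℝ) * d / Real.log d) ^ ((1 : ℝ) / r)))
      Filter.atTop (nhds 1) := by
  have hbounds : ∀ᶠ d : ℕ in atTop, 0 < u d ∧ u d ^ r < 1 ∧
      (1 - u d ^ r) * -log (u d ^ r) ≤ r * d * u d ^ r ∧
      (d - 2) * u d ^ r ≤ log (1 + r * d * (u d ^ r) ^ (1 - (r : ℝ)⁻¹)) := by
    filter_upwards [eventually_ge_atTop 3] with d hd
    obtain ⟨hu0, hsum, htsum⟩ := hu d (by omega)
    have h : HasSum (uSeriesTerm r (d - 2) (u d)) 1 := by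
      convert htsum ▸ hsum.hasSum using 2 with m
      rw [uSeriesTerm, Nat.add_sub_assoc (by omega)]
    exact ⟨hu0, pow_lt_one_of_hasSum_uSeriesTerm (by omega) hu0 h,
      log_bounds_of_hasSum_uSeriesTerm hr hd hu0 h⟩
  have hx := tendsto_mul_mul_div_log_of_bounds (x := fun d => u d ^ r) (by exact_mod_cast hr)
    (hbounds.mono fun _ h => ⟨pow_pos h.1 r, h.2.1.le⟩) (hbounds.mono fun _ h => h.2.2.1)
    (hbounds.mono fun _ h => h.2.2.2)
  have hroot := hx.rpow_const (p := (r : ℝ)⁻¹) (.inr (by positivity))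
  rw [one_rpow] at hroot
  refine hroot.congr' ?_
  filter_upwards [hbounds, eventually_ge_atTop 1] with d ⟨hu0, _⟩ hd
  have hlog : 0 ≤ log d := log_nonneg (by exact_mod_cast hd)
  rw [mul_rpow (by positivity) (by positivity), pow_rpow_inv_natCast hu0.le (by omega), one_div]
end

section
/- Fix an integer r ≥ 1. Then f(d,r) ~ (log d / (r·d))^{1/r} as d → ∞; that is, f(d,r)·(r·d/ log d)^{1/r} → 1 as d → ∞. -/
/-!
Write `x = u ^ r` and `k = d - 2`. Bounding `1 / (r m + 1)` above by `1` and below by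
`1 / (r (m + 1))` compares the defining series with the binomial series `∑ C(m + k, k) x ^ m`,
which gives `(1 - x) ^ (k + 1) ≤ u` and `((1 - x) ^ k)⁻¹ ≤ 1 + r k u ^ (r - 1)`. In logarithmic
form: `(1 - x) log x⁻¹ ≤ r d x` and `d x ≤ log (1 + r d x ^ (1 - 1/r)) + 2`. The latter first
yields the crude bound `d x ≤ 3 log d`; substituting it back into both inequalities squeezes
`r d x` between `log d - O(log log d)` and `log d + O(log log d)`. Hence `r d x / log d → 1`,
so `x → 0` and `f = u (1 - x / (r + 1)) ~ (log d / (r d)) ^ (1 / r)`.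
-/

open Filter Real Topology Finset

noncomputable def seriesTerm (r k : ℕ) (u : ℝ) (m : ℕ) : ℝ :=
  (m + k).choose k * u ^ (r * m + 1) / (r * m + 1)

section Series

variable {r k : ℕ} {u : ℝ}

lemma lt_one_of_hasSum_seriesTerm (hu : 0 < u) (h : HasSum (seriesTerm r k u) 1) : u < 1 := by
  have h2 := sum_le_hasSum (range 2) (fun m _ => by unfold seriesTerm; positivity) h
  simp only [sum_range_succ, sum_range_zero, seriesTerm] at h2
  have : 0 < ((1 + k).choose k : ℝ) * u ^ (r * 1 + 1) / (r * 1 + 1) := by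
    have := Nat.choose_pos (Nat.le_add_left k 1)
    positivity
  norm_num at h2 this ⊢
  linarith

lemma norm_pow_lt_one_of_hasSum_seriesTerm (hr : r ≠ 0) (hu : 0 < u)
    (h : HasSum (seriesTerm r k u) 1) : ‖u ^ r‖ < 1 := by
  rw [norm_pow, Real.norm_of_nonneg hu.le]
  exact pow_lt_one₀ hu.le (lt_one_of_hasSum_seriesTerm hu h) hr

lemma one_sub_pow_succ_le_of_hasSum_seriesTerm (hr : r ≠ 0) (hu : 0 < u)
    (h : HasSum (seriesTerm r k u) 1) : (1 - u ^ r) ^ (k + 1) ≤ u := by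
  have hx := norm_pow_lt_one_of_hasSum_seriesTerm hr hu h
  have hle : 1 ≤ u * (1 / (1 - u ^ r) ^ (k + 1)) := by
    refine hasSum_le (fun m => ?_) h
      ((hasSum_choose_mul_geometric_of_norm_lt_one k hx).mul_left u)
    rw [seriesTerm, ← pow_mul, mul_comm r m, pow_succ]
    calc _ ≤ ((m + k).choose k : ℝ) * (u ^ (m * r) * u) :=
          div_le_self (by positivity) (le_add_of_nonneg_left (by positivity))
      _ = _ := by ring
  have hpos : 0 < (1 - u ^ r) ^ (k + 1) :=
    pow_pos (by linarith [Real.le_norm_self (u ^ r)]) _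
  rwa [mul_one_div, le_div_iff₀ hpos, one_mul] at hle

lemma inv_one_sub_pow_le_of_hasSum_seriesTerm (hr : r ≠ 0) (hk : k ≠ 0) (hu : 0 < u)
    (h : HasSum (seriesTerm r k u) 1) : ((1 - u ^ r) ^ k)⁻¹ ≤ 1 + r * k * u ^ (r - 1) := by
  obtain ⟨j, rfl⟩ := Nat.exists_eq_add_one_of_ne_zero hk
  have hgeom : HasSum (fun m : ℕ => ((m + 1 + j).choose j : ℝ) * (u ^ r) ^ (m + 1))
      (1 / (1 - u ^ r) ^ (j + 1) - 1) := by
    have := (hasSum_nat_add_iff' (f := fun n : ℕ => ((n + j).choose j : ℝ) * (u ^ r) ^ n) 1).mpr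
      (hasSum_choose_mul_geometric_of_norm_lt_one j (norm_pow_lt_one_of_hasSum_seriesTerm hr hu h))
    simpa using this
  have hterm (m : ℕ) : ((m + 1 + j).choose j : ℝ) * (u ^ r) ^ (m + 1) ≤
      r * (j + 1 : ℕ) * u ^ (r - 1) * seriesTerm r (j + 1) u m := by
    have hc := Nat.choose_succ_right_eq (m + 1 + j) j
    rw [show m + 1 + j - j = m + 1 by omega] at hc
    have hchoose : ((m + 1 + j).choose (j + 1) : ℝ) * (j + 1) =
        ((m + 1 + j).choose j : ℝ) * (m + 1) := by exact_mod_cast hc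
    have hpow : u ^ (r - 1) * u ^ (r * m + 1) = (u ^ r) ^ (m + 1) := by
      rw [← pow_add, ← pow_mul]; congr 1; cases r <;> grind
    have hr1 : (1 : ℝ) ≤ r := by exact_mod_cast Nat.one_le_iff_ne_zero.mpr hr
    have hden : (0 : ℝ) < r * m + 1 := by positivity
    have key : r * (j + 1 : ℕ) * u ^ (r - 1) * seriesTerm r (j + 1) u m =
        (r * (m + 1) / (r * m + 1)) * (((m + 1 + j).choose j : ℝ) * (u ^ r) ^ (m + 1)) := by
      rw [seriesTerm, show m + (j + 1) = m + 1 + j by ring, ← hpow]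
      push_cast
      field_simp
      linear_combination hchoose
    rw [key]
    refine le_mul_of_one_le_left (by positivity) ?_
    rw [one_le_div hden]
    linarith
  have hle := hasSum_le hterm hgeom (h.mul_left _)
  rw [one_div, mul_one] at hle
  linarith

lemma mul_le_log_of_hasSum_seriesTerm (hr : r ≠ 0) (hk : k ≠ 0) (hu : 0 < u)
    (h : HasSum (seriesTerm r k u) 1) : k * u ^ r ≤ log (1 + r * k * u ^ (r - 1)) := by
  have hx : u ^ r < 1 := pow_lt_one₀ hu.le (lt_one_of_hasSum_seriesTerm hu h) hr
  rw [le_log_iff_exp_le (by positivity)]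
  calc exp (k * u ^ r) = (exp (-u ^ r) ^ k)⁻¹ := by
        rw [← exp_nat_mul, ← exp_neg]; ring_nf
    _ ≤ ((1 - u ^ r) ^ k)⁻¹ :=
        inv_anti₀ (pow_pos (by linarith) k) (pow_le_pow_left₀ (by linarith) (one_sub_le_exp_neg _) k)
    _ ≤ _ := inv_one_sub_pow_le_of_hasSum_seriesTerm hr hk hu h

lemma one_sub_mul_log_inv_le_of_hasSum_seriesTerm (hr : r ≠ 0) (hu : 0 < u)
    (h : HasSum (seriesTerm r k u) 1) : (1 - u ^ r) * log (u ^ r)⁻¹ ≤ r * (k + 1) * u ^ r := by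
  have hx : 0 < 1 - u ^ r := sub_pos.mpr (pow_lt_one₀ hu.le (lt_one_of_hasSum_seriesTerm hu h) hr)
  have hlog := log_le_log (by positivity) (one_sub_pow_succ_le_of_hasSum_seriesTerm hr hu h)
  rw [log_pow] at hlog
  push_cast at hlog
  have key : (k + 1) * (1 - (1 - u ^ r)⁻¹) ≤ log u := by
    nlinarith [one_sub_inv_le_log_of_pos hx]
  have : r * (k + 1) * -u ^ r ≤ (1 - u ^ r) * (r * log u) :=
    calc r * (k + 1) * -u ^ r = r * (1 - u ^ r) * ((k + 1) * (1 - (1 - u ^ r)⁻¹)) := by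
          field_simp; ring
      _ ≤ r * (1 - u ^ r) * log u := by gcongr
      _ = _ := by ring
  rw [log_inv, log_pow]
  linarith

lemma pow_rpow_one_sub_inv (hu : 0 ≤ u) (hr : r ≠ 0) :
    (u ^ r) ^ (1 - 1 / (r : ℝ)) = u ^ (r - 1) := by
  rw [← rpow_natCast, ← rpow_mul hu, ← rpow_natCast, Nat.cast_sub (Nat.one_le_iff_ne_zero.mpr hr)]
  congr 1
  field_simp
  simp

lemma add_two_mul_le_log_of_hasSum_seriesTerm (hr : r ≠ 0) (hk : k ≠ 0) (hu : 0 < u)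
    (h : HasSum (seriesTerm r k u) 1) :
    (k + 2) * u ^ r ≤ log (1 + r * (k + 2) * (u ^ r) ^ (1 - 1 / (r : ℝ))) + 2 := by
  have hk_le := mul_le_log_of_hasSum_seriesTerm hr hk hu h
  have hx1 : u ^ r ≤ 1 := pow_le_one₀ hu.le (lt_one_of_hasSum_seriesTerm hu h).le
  have hterm : 0 ≤ (r : ℝ) * u ^ (r - 1) := by positivity
  have hmono : log (1 + r * k * u ^ (r - 1)) ≤ log (1 + r * (k + 2) * u ^ (r - 1)) :=
    log_le_log (by positivity) (by nlinarith)
  rw [pow_rpow_one_sub_inv hu.le hr]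
  linarith

end Series

section Asymptotics

variable {r t x : ℝ}

lemma mul_le_three_mul_log (hr : 1 ≤ r) (ht : r + 1 ≤ t) (hlog : 2 ≤ log t) (hx0 : 0 ≤ x)
    (hx1 : x ≤ 1) (hup : t * x ≤ log (1 + r * t * x ^ (1 - 1 / r)) + 2) :
    t * x ≤ 3 * log t := by
  set p := 1 - 1 / r
  have hp : 0 ≤ p := by rw [sub_nonneg, div_le_one (by linarith)]; exact hr
  have hterm : 0 ≤ r * t * x ^ p := mul_nonneg (by nlinarith) (rpow_nonneg hx0 p)
  have hterm_le : r * t * x ^ p ≤ r * t :=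
    mul_le_of_le_one_right (by nlinarith) (rpow_le_one hx0 hx1 hp)
  have hsq := log_le_log (by linarith) (show 1 + r * t * x ^ p ≤ t ^ 2 by nlinarith)
  rw [log_pow, Nat.cast_ofNat] at hsq
  linarith

lemma mul_mul_div_log_le (hr : 1 ≤ r) (ht : 1 ≤ t) (hlog : 1 ≤ log t) (hx0 : 0 ≤ x)
    (hx : t * x ≤ 3 * log t) (hup : t * x ≤ log (1 + r * t * x ^ (1 - 1 / r)) + 2) :
    r * t * x / log t ≤ 1 + r * (log (4 * r) + 2 + log (log t)) / log t := by
  set p := 1 - 1 / r with hp_def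
  have hr0 : 0 < r := by linarith
  have hp : 0 ≤ p := by rw [hp_def, sub_nonneg, div_le_one hr0]; exact hr
  have hp1 : p ≤ 1 := by rw [hp_def]; have := one_div_pos.mpr hr0; linarith
  have ht0 : 0 < t := by linarith
  have htr : 1 ≤ t ^ (1 / r) := one_le_rpow ht (by positivity)
  have hsplit : t * (3 * log t / t) ^ p = t ^ (1 / r) * (3 * log t) ^ p := by
    have htt : t ^ (1 / r) * t ^ p = t := by rw [← rpow_add ht0, hp_def, add_sub_cancel, rpow_one]
    calc t * (3 * log t / t) ^ p = t ^ (1 / r) * t ^ p * ((3 * log t) ^ p / t ^ p) := by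
          rw [htt, div_rpow (by positivity) ht0.le]
      _ = _ := by field_simp
  have hbound : 1 + r * t * x ^ p ≤ t ^ (1 / r) * (4 * r * log t) :=
    calc 1 + r * t * x ^ p ≤ 1 + r * (t * (3 * log t / t) ^ p) := by
          rw [mul_assoc]
          gcongr
          exact (le_div_iff₀ ht0).mpr (by linarith)
      _ = 1 + r * (t ^ (1 / r) * (3 * log t) ^ p) := by rw [hsplit]
      _ ≤ t ^ (1 / r) + r * (t ^ (1 / r) * (3 * log t)) := by
          gcongr
          exact rpow_le_self_of_one_le (by linarith) hp1
      _ ≤ t ^ (1 / r) * (4 * r * log t) := by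
          nlinarith [mul_le_mul_of_nonneg_left (show 1 ≤ r * log t by nlinarith) (by positivity :
            (0 : ℝ) ≤ t ^ (1 / r))]
  have hlogb := log_le_log (by positivity) hbound
  rw [log_mul (by positivity) (by positivity), log_rpow ht0,
    log_mul (by positivity) (by positivity)] at hlogb
  rw [div_le_iff₀ (by positivity), add_mul, one_mul, div_mul_cancel₀ _ (by positivity)]
  have : r * (1 / r * log t) = log t := by field_simp
  nlinarith

lemma le_mul_mul_div_log (hlog : 1 ≤ log t) (hx0 : 0 < x) (hx : t * x ≤ 3 * log t)
    (hxt : 3 * log t ≤ t) (hlo : (1 - x) * log x⁻¹ ≤ r * t * x) :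
    (1 - 3 * log t / t) * (1 - (log 3 + log (log t)) / log t) ≤ r * t * x / log t := by
  have ht0 : 0 < t := by linarith
  have hL0 : 0 < 3 * log t := by linarith
  have hxle : x ≤ 3 * log t / t := by rw [le_div_iff₀ ht0]; linarith
  have hlog_le : log (t / (3 * log t)) ≤ log x⁻¹ :=
    log_le_log (by positivity) (by rw [le_inv_comm₀ (by positivity) hx0, inv_div]; exact hxle)
  have hlog_nonneg : 0 ≤ log (t / (3 * log t)) := log_nonneg (by rw [le_div_iff₀ hL0]; linarith)
  have hone_sub : 0 ≤ 1 - 3 * log t / t := by rw [sub_nonneg, div_le_one ht0]; exact hxt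
  have hfactor : (1 - (log 3 + log (log t)) / log t) * log t = log (t / (3 * log t)) := by
    rw [log_div ht0.ne' hL0.ne', log_mul (by norm_num) (by linarith)]
    field_simp
  rw [le_div_iff₀ (by linarith), mul_assoc, hfactor]
  calc (1 - 3 * log t / t) * log (t / (3 * log t)) ≤ (1 - x) * log x⁻¹ := by gcongr; linarith
    _ ≤ r * t * x := hlo

lemma tendsto_const_add_log_log_div_log (c : ℝ) :
    Tendsto (fun t => (c + log (log t)) / log t) atTop (𝓝 0) := by
  have h := ((tendsto_const_nhds (x := c)).div_atTop tendsto_id).add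
    isLittleO_log_id_atTop.tendsto_div_nhds_zero
  rw [add_zero] at h
  exact (h.comp tendsto_log_atTop).congr fun t => by simp [add_div]

end Asymptotics

lemma tendsto_mul_mul_div_log {r : ℝ} (hr : 1 ≤ r) {x : ℕ → ℝ}
    (hx : ∀ᶠ d : ℕ in atTop, 0 < x d ∧ x d ≤ 1)
    (hup : ∀ᶠ d : ℕ in atTop, d * x d ≤ log (1 + r * d * x d ^ (1 - 1 / r)) + 2)
    (hlo : ∀ᶠ d : ℕ in atTop, (1 - x d) * log (x d)⁻¹ ≤ r * d * x d) :
    Tendsto (fun d : ℕ => r * d * x d / log d) atTop (𝓝 1) := by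
  have hlog_div : Tendsto (fun t => log t / t) atTop (𝓝 0) :=
    isLittleO_log_id_atTop.tendsto_div_nhds_zero
  have hlower : Tendsto (fun t => (1 - 3 * log t / t) * (1 - (log 3 + log (log t)) / log t))
      atTop (𝓝 1) := by
    simpa [mul_div_assoc] using ((hlog_div.const_mul 3).const_sub 1).mul
      ((tendsto_const_add_log_log_div_log (log 3)).const_sub 1)
  have hupper : Tendsto (fun t => 1 + r * (log (4 * r) + 2 + log (log t)) / log t)
      atTop (𝓝 1) := by
    simpa [mul_div_assoc] using
      ((tendsto_const_add_log_log_div_log (log (4 * r) + 2)).const_mul r).const_add 1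
  have hnat := tendsto_natCast_atTop_atTop (R := ℝ)
  have hsmall : ∀ᶠ d : ℕ in atTop, 3 * log d ≤ (d : ℝ) := by
    filter_upwards [(hlog_div.comp hnat).eventually (eventually_le_nhds (by norm_num : (0:ℝ) < 1 / 3)),
      eventually_gt_atTop 0] with d hd hd0
    have : (0 : ℝ) < d := by exact_mod_cast hd0
    simp only [Function.comp, div_le_iff₀ this] at hd
    linarith
  have hbig : ∀ᶠ d : ℕ in atTop, r + 1 ≤ (d : ℝ) ∧ 2 ≤ log d :=
    (hnat.eventually_ge_atTop _).and ((tendsto_log_atTop.comp hnat).eventually_ge_atTop 2)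
  have hcrude : ∀ᶠ d : ℕ in atTop, d * x d ≤ 3 * log d := by
    filter_upwards [hx, hup, hbig] with d hxd hupd hd
    exact mul_le_three_mul_log hr hd.1 hd.2 hxd.1.le hxd.2 hupd
  refine tendsto_of_tendsto_of_tendsto_of_le_of_le' (hlower.comp hnat) (hupper.comp hnat) ?_ ?_
  · filter_upwards [hx, hlo, hcrude, hsmall, hbig] with d hxd hlod hcd hsd hd
    exact le_mul_mul_div_log (by linarith) hxd.1 hcd hsd hlod
  · filter_upwards [hx, hup, hcrude, hbig] with d hxd hupd hcd hd
    exact mul_mul_div_log_le hr (by linarith) (by linarith) hxd.1.le hcd hupd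

lemma tendsto_sub_pow_div_mul_rpow {r : ℕ} (hr : r ≠ 0) {u : ℕ → ℝ} (hu : ∀ᶠ d in atTop, 0 < u d)
    (h : Tendsto (fun d : ℕ => r * d * u d ^ r / log d) atTop (𝓝 1)) :
    Tendsto (fun d : ℕ => (u d - u d ^ (r + 1) / (r + 1)) * ((r * d / log d) ^ (1 / (r : ℝ))))
      atTop (𝓝 1) := by
  have hlog_pos : ∀ᶠ d : ℕ in atTop, 0 < log (d : ℝ) :=
    (tendsto_log_atTop.comp tendsto_natCast_atTop_atTop).eventually_gt_atTop 0
  have hx : Tendsto (fun d => u d ^ r) atTop (𝓝 0) := by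
    have := (h.mul (isLittleO_log_id_atTop.tendsto_div_nhds_zero.comp
      tendsto_natCast_atTop_atTop)).div_const (r : ℝ)
    rw [mul_zero, zero_div] at this
    refine this.congr' ?_
    filter_upwards [hlog_pos, eventually_ne_atTop 0] with d hd hd0
    simp only [Function.comp, id]
    field_simp
  have hlim := (h.rpow_const (p := 1 / (r : ℝ)) (Or.inl one_ne_zero)).mul
    ((hx.div_const ((r : ℝ) + 1)).const_sub 1)
  rw [one_rpow, zero_div, sub_zero, one_mul] at hlim
  refine hlim.congr' ?_
  filter_upwards [hu, hlog_pos] with d hud hd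
  rw [show (r : ℝ) * d * u d ^ r / log d = u d ^ r * (r * d / log d) by ring,
    mul_rpow (by positivity) (by positivity), one_div, pow_rpow_inv_natCast hud.le hr, pow_succ]
  field_simp

theorem f_asymptotics (r : ℕ) (hr : 1 ≤ r) (u : ℕ → ℝ)
    (hu : ∀ d : ℕ, 2 ≤ d → 0 < u d ∧
      Summable (fun m : ℕ =>
        ((m + d - 2).choose (d - 2) : ℝ) * u d ^ (r * m + 1) / (r * m + 1)) ∧
      ∑' m : ℕ, ((m + d - 2).choose (d - 2) : ℝ) * u d ^ (r * m + 1) / (r * m + 1) = 1) :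
    Filter.Tendsto
      (fun d : ℕ => (u d - u d ^ (r + 1) / (r + 1)) *
        (((r : ℝ) * d / Real.log d) ^ ((1 : ℝ) / r)))
      Filter.atTop (nhds 1) := by
  have hr0 : r ≠ 0 := by omega
  have hseries (k : ℕ) : HasSum (seriesTerm r k (u (k + 2))) 1 := by
    obtain ⟨-, hs, ht⟩ := hu (k + 2) (by omega)
    simp only [show ∀ m, m + (k + 2) - 2 = m + k by omega, Nat.add_sub_cancel] at hs ht
    exact hs.hasSum_iff.mpr ht
  have hbounds : ∀ᶠ d : ℕ in atTop, (0 < u d ^ r ∧ u d ^ r ≤ 1) ∧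
      d * u d ^ r ≤ log (1 + r * d * (u d ^ r) ^ (1 - 1 / (r : ℝ))) + 2 ∧
      (1 - u d ^ r) * log (u d ^ r)⁻¹ ≤ r * d * u d ^ r := by
    filter_upwards [eventually_ge_atTop 3] with d hd
    obtain ⟨k, rfl⟩ : ∃ k, d = k + 2 := ⟨d - 2, by omega⟩
    have hud := (hu (k + 2) (by omega)).1
    have hlower := one_sub_mul_log_inv_le_of_hasSum_seriesTerm hr0 hud (hseries k)
    push_cast
    refine ⟨⟨by positivity, pow_le_one₀ hud.le (lt_one_of_hasSum_seriesTerm hud (hseries k)).le⟩,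
      add_two_mul_le_log_of_hasSum_seriesTerm hr0 (by omega) hud (hseries k),
      hlower.trans (by gcongr; linarith)⟩
  exact tendsto_sub_pow_div_mul_rpow hr0 ((eventually_ge_atTop 2).mono fun d hd => (hu d hd).1)
    (tendsto_mul_mul_div_log (by exact_mod_cast hr) (hbounds.mono fun _ h => h.1)
      (hbounds.mono fun _ h => h.2.1) (hbounds.mono fun _ h => h.2.2))
end
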